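/- arXiv:2512.03468 — 6 statements merged into one kernel-verified Lean document; each statement's English description precedes it below -/
import Mathlib

section
/- Let P and Q be nonzero integers with D = P^2 - 4Q ≠ 0, let U = U(P,Q) be nondegenerate, and let p be a prime with p ∣ D and p ∤ gcd(P,Q). Then for every integer k ≥ 1 one has M^U_{p^k} ≡ p (mod p^k); that is, there exists an integer t such that M^U_{p^k} = p + p^k·t. -/
/-!
Write `n = p ^ c` and `V_n = 2 U_{n+1} - P U_n`. The multiplication formula
`U_{n m}(P, Q) = U_n(P, Q) · U_m(V_n, Qⁿ)` turns `M_{p^{c+1}} = U_{p^{c+1}} / U_{p^c}` into the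
integer `U_p(V_n, Qⁿ)`, whose discriminant `V_n² - 4Qⁿ = D U_n²` is divisible by `p^{c+1}`,
because `p ^ j ∣ U_{p^j}`.

For odd `p = 2h + 1`, the binomial expansion of `U_p` gives `2^{p-1} U_p ≡ p P^{p-1}` modulo the
discriminant, and `P^{p-1} ≡ (4Q)^h`; Euler's criterion for the square `4Q ≡ P² (mod p)` gives
`Q^h ≡ 1 (mod p)`, which lifts to `(Qⁿ)^h ≡ 1 (mod p^{c+1})`. Hence `U_p(V_n, Qⁿ) ≡ p`.
For `p = 2`, `U_2(V_n, Qⁿ) = V_{2^c}`, and `V_{2m} = V_m² - 2Q^m` with `P` even and `Q` odd gives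
`V_{2^c} ≡ 2 (mod 2^{c+1})` by induction on `c`.
-/

/-- Lucas sequence of the first kind: `U 0 = 0`, `U 1 = 1`,
`U (n+2) = P * U (n+1) - Q * U n`. -/
def lucasU (P Q : ℤ) : ℕ → ℤ
  | 0 => 0
  | 1 => 1
  | n + 2 => P * lucasU P Q (n + 1) - Q * lucasU P Q n

/-- Möbius dual of the Lucas sequence of the first kind:
`M^U_n = ∏_{d ∣ n} U_d ^ μ(n/d)`, as a rational number. -/
def mobiusDualU (P Q : ℤ) (n : ℕ) : ℚ :=
  ∏ d ∈ n.divisors, (lucasU P Q d : ℚ) ^ (ArithmeticFunction.moebius (n / d))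

/-- The companion sequence `V_n = αⁿ + βⁿ`, expressed through `U`. -/
def lucasV (P Q : ℤ) (n : ℕ) : ℤ := 2 * lucasU P Q (n + 1) - P * lucasU P Q n

section Identities

variable (P Q : ℤ)

@[simp] lemma lucasU_zero : lucasU P Q 0 = 0 := rfl

@[simp] lemma lucasU_one : lucasU P Q 1 = 1 := rfl

lemma lucasU_add_two (n : ℕ) :
    lucasU P Q (n + 2) = P * lucasU P Q (n + 1) - Q * lucasU P Q n := rfl

@[simp] lemma lucasU_two : lucasU P Q 2 = P := by simp [lucasU_add_two P Q 0]

@[simp] lemma lucasV_one : lucasV P Q 1 = P := by simp [lucasV]; ring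

lemma lucasU_add (m n : ℕ) : lucasU P Q (m + n + 1) =
    lucasU P Q (m + 1) * lucasU P Q (n + 1) - Q * lucasU P Q m * lucasU P Q n := by
  induction m generalizing n with
  | zero => simp
  | succ m ih =>
    rw [show m + 1 + n + 1 = m + (n + 1) + 1 by omega, ih, lucasU_add_two, lucasU_add_two]
    ring

lemma lucasU_succ_sq_sub (n : ℕ) : lucasU P Q (n + 1) ^ 2
    - P * lucasU P Q (n + 1) * lucasU P Q n + Q * lucasU P Q n ^ 2 = Q ^ n := by
  induction n with
  | zero => simp
  | succ n ih =>
    rw [lucasU_add_two]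
    linear_combination Q * ih

lemma lucasV_sq_sub (n : ℕ) :
    lucasV P Q n ^ 2 - 4 * Q ^ n = (P ^ 2 - 4 * Q) * lucasU P Q n ^ 2 := by
  rw [lucasV]
  linear_combination 4 * lucasU_succ_sq_sub P Q n

lemma lucasU_add_two_mul (a n : ℕ) :
    lucasU P Q (a + 2 * n) = lucasV P Q n * lucasU P Q (a + n) - Q ^ n * lucasU P Q a := by
  induction a using Nat.twoStepInduction with
  | zero =>
    rcases n with _ | n
    · simp
    have h := lucasU_add P Q n (n + 1)
    rw [show n + (n + 1) + 1 = 0 + 2 * (n + 1) by omega, lucasU_add_two] at h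
    rw [h, lucasV, lucasU_add_two]
    simp only [zero_add, lucasU_zero]
    ring
  | one =>
    rw [show 1 + 2 * n = n + n + 1 by omega, lucasU_add, add_comm 1, lucasV, lucasU_one]
    linear_combination -lucasU_succ_sq_sub P Q n
  | more a ih₀ ih₁ =>
    rw [show a + 2 + 2 * n = a + 2 * n + 2 by omega, show a + 2 + n = a + n + 2 by omega,
      lucasU_add_two, lucasU_add_two, lucasU_add_two, show a + 2 * n + 1 = a + 1 + 2 * n by omega,
      show a + n + 1 = a + 1 + n by omega, ih₀, ih₁]
    ring

lemma lucasU_mul (n m : ℕ) :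
    lucasU P Q (n * m) = lucasU P Q n * lucasU (lucasV P Q n) (Q ^ n) m := by
  induction m using Nat.twoStepInduction with
  | zero => simp
  | one => simp
  | more m ih₀ ih₁ =>
    rw [lucasU_add_two, show n * (m + 2) = n * m + 2 * n by ring, lucasU_add_two_mul,
      show n * m + n = n * (m + 1) by ring, ih₀, ih₁]
    ring

lemma lucasV_two_mul (m : ℕ) : lucasV P Q (2 * m) = lucasV P Q m ^ 2 - 2 * Q ^ m := by
  have h₀ := lucasU_add_two_mul P Q 0 m
  have h₁ := lucasU_add_two_mul P Q 1 m
  simp only [zero_add, lucasU_zero, mul_zero, sub_zero, lucasU_one, mul_one] at h₀ h₁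
  rw [lucasV, add_comm, h₁, h₀, add_comm 1, lucasV]
  ring

lemma two_pow_mul_lucasU_succ_modEq (m : ℕ) :
    2 ^ m * lucasU P Q (m + 1) ≡ (m + 1) * P ^ m [ZMOD P ^ 2 - 4 * Q] := by
  induction m using Nat.twoStepInduction with
  | zero => simp
  | one => simp
  | more m ih₀ ih₁ =>
    have hD : 4 * Q ≡ P ^ 2 [ZMOD P ^ 2 - 4 * Q] := Int.modEq_iff_dvd.mpr dvd_rfl
    calc 2 ^ (m + 2) * lucasU P Q (m + 2 + 1)
        = 2 * P * (2 ^ (m + 1) * lucasU P Q (m + 1 + 1))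
          - 4 * Q * (2 ^ m * lucasU P Q (m + 1)) := by rw [lucasU_add_two]; ring
      _ ≡ 2 * P * ((m + 1 + 1) * P ^ (m + 1)) - P ^ 2 * ((m + 1) * P ^ m)
          [ZMOD P ^ 2 - 4 * Q] := by push_cast at ih₁; gcongr
      _ = _ := by push_cast; ring

end Identities

section Congruences

variable {P Q : ℤ}

lemma isCoprime_two_of_odd {p : ℕ} (hodd : Odd p) : IsCoprime (2 : ℤ) p := by
  exact_mod_cast Nat.isCoprime_iff_coprime.mpr (Nat.coprime_two_left.mpr hodd)

lemma two_dvd_of_two_dvd_discr (hD : (2 : ℤ) ∣ P ^ 2 - 4 * Q) : (2 : ℤ) ∣ P :=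
  Int.prime_two.dvd_of_dvd_pow (n := 2) <| by
    simpa using hD.add (dvd_mul_of_dvd_left (by norm_num : (2 : ℤ) ∣ 4) Q)

lemma prime_dvd_lucasU_self {p : ℕ} (hp : p.Prime) (hpD : (p : ℤ) ∣ P ^ 2 - 4 * Q) :
    (p : ℤ) ∣ lucasU P Q p := by
  obtain rfl | hodd := hp.eq_two_or_odd'
  · simpa using two_dvd_of_two_dvd_discr (by exact_mod_cast hpD)
  have h := ((two_pow_mul_lucasU_succ_modEq P Q (p - 1)).of_dvd hpD).dvd
  rw [Nat.sub_add_cancel hp.one_le, Nat.cast_pred hp.pos, sub_add_cancel] at h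
  have hcop : IsCoprime (p : ℤ) (2 ^ (p - 1)) := (isCoprime_two_of_odd hodd).symm.pow_right
  exact hcop.dvd_of_dvd_mul_left ((dvd_sub_right (dvd_mul_right _ _)).mp h)

lemma pow_dvd_lucasU_pow {p : ℕ} (hp : p.Prime) (hpD : (p : ℤ) ∣ P ^ 2 - 4 * Q) (j : ℕ) :
    (p : ℤ) ^ j ∣ lucasU P Q (p ^ j) := by
  induction j with
  | zero => simp
  | succ j ih =>
    rw [pow_succ, pow_succ, lucasU_mul]
    refine mul_dvd_mul ih (prime_dvd_lucasU_self hp ?_)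
    rw [lucasV_sq_sub]
    exact hpD.mul_right _

/-- Euler's criterion for the square class `4Q ≡ P²`. -/
lemma dvd_pow_sub_one_of_dvd_discr {p h : ℕ} (hp : p.Prime) (hph : p = 2 * h + 1)
    (hpD : (p : ℤ) ∣ P ^ 2 - 4 * Q) (hpP : ¬ (p : ℤ) ∣ P) : (p : ℤ) ∣ Q ^ h - 1 := by
  have hp' : Prime (p : ℤ) := Nat.prime_iff_prime_int.mp hp
  have fermat {a : ℤ} (ha : IsCoprime a p) : (a ^ 2) ^ h ≡ 1 [ZMOD p] := by
    rw [← pow_mul, ← Nat.add_sub_cancel (2 * h) 1, ← hph]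
    exact Int.ModEq.pow_card_sub_one_eq_one hp ha
  have h4 : (2 ^ 2) ^ h ≡ 1 [ZMOD p] := fermat (isCoprime_two_of_odd ⟨h, hph⟩)
  have hP : (P ^ 2) ^ h ≡ 1 [ZMOD p] := fermat ((hp'.coprime_iff_not_dvd.mpr hpP).symm)
  have hQ : Q ^ h ≡ 1 [ZMOD p] := calc
    Q ^ h = 1 * Q ^ h := (one_mul _).symm
    _ ≡ (2 ^ 2) ^ h * Q ^ h [ZMOD p] := h4.symm.mul_right _
    _ = (4 * Q) ^ h := by rw [mul_pow]; norm_num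
    _ ≡ (P ^ 2) ^ h [ZMOD p] := (Int.modEq_iff_dvd.mpr hpD).pow h
    _ ≡ 1 [ZMOD p] := hP
  exact hQ.symm.dvd

lemma lucasU_two_mul_add_one_modEq {N : ℤ} (hN : IsCoprime 2 N) (hD : N ∣ P ^ 2 - 4 * Q)
    {h : ℕ} (hQ : N ∣ Q ^ h - 1) :
    lucasU P Q (2 * h + 1) ≡ (2 * h + 1 : ℕ) [ZMOD N] := by
  have hP : P ^ (2 * h) ≡ 2 ^ (2 * h) [ZMOD N] := calc
    P ^ (2 * h) = (P ^ 2) ^ h := pow_mul _ _ _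
    _ ≡ (4 * Q) ^ h [ZMOD N] := (Int.modEq_iff_dvd.mpr hD).symm.pow h
    _ = 2 ^ (2 * h) * Q ^ h := by rw [mul_pow, pow_mul]; norm_num
    _ ≡ 2 ^ (2 * h) * 1 [ZMOD N] := (Int.modEq_iff_dvd.mpr hQ).symm.mul_left _
    _ = 2 ^ (2 * h) := mul_one _
  have key : lucasU P Q (2 * h + 1) * 2 ^ (2 * h) ≡ (2 * h + 1 : ℕ) * 2 ^ (2 * h) [ZMOD N] :=
    calc lucasU P Q (2 * h + 1) * 2 ^ (2 * h)
      _ = 2 ^ (2 * h) * lucasU P Q (2 * h + 1) := mul_comm _ _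
      _ ≡ (((2 * h : ℕ) : ℤ) + 1) * P ^ (2 * h) [ZMOD N] :=
        (two_pow_mul_lucasU_succ_modEq P Q (2 * h)).of_dvd hD
      _ ≡ (((2 * h : ℕ) : ℤ) + 1) * 2 ^ (2 * h) [ZMOD N] := hP.mul_left _
      _ = (2 * h + 1 : ℕ) * 2 ^ (2 * h) := by push_cast; ring
  have hcop : IsCoprime N (2 ^ (2 * h)) := hN.symm.pow_right
  exact Int.modEq_iff_dvd.mpr (hcop.dvd_of_dvd_mul_right (by simpa [sub_mul] using key.dvd))

end Congruences

section PrimePower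

variable {P Q : ℤ} {p : ℕ}

lemma lucasU_lucasV_pow_modEq_of_odd (hp : p.Prime) (hodd : Odd p)
    (hpD : (p : ℤ) ∣ P ^ 2 - 4 * Q) (hpP : ¬ (p : ℤ) ∣ P) (c : ℕ) :
    lucasU (lucasV P Q (p ^ c)) (Q ^ p ^ c) p ≡ p [ZMOD p ^ (c + 1)] := by
  obtain ⟨h, hph⟩ := hodd
  have hD : (p : ℤ) ^ (c + 1) ∣ lucasV P Q (p ^ c) ^ 2 - 4 * Q ^ p ^ c := by
    rw [lucasV_sq_sub, pow_succ', sq (lucasU P Q _)]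
    exact mul_dvd_mul hpD ((pow_dvd_lucasU_pow hp hpD c).mul_right _)
  have hQ : (p : ℤ) ^ (c + 1) ∣ (Q ^ p ^ c) ^ h - 1 := by
    rw [← pow_mul, mul_comm, pow_mul]
    simpa using dvd_sub_pow_of_dvd_sub (dvd_pow_sub_one_of_dvd_discr hp hph hpD hpP) c
  have key := lucasU_two_mul_add_one_modEq (isCoprime_two_of_odd ⟨h, hph⟩).pow_right hD hQ
  rwa [← hph] at key

lemma lucasV_two_pow_modEq (hP : (2 : ℤ) ∣ P) (hQ : Odd Q) (c : ℕ) :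
    lucasV P Q (2 ^ c) ≡ 2 [ZMOD 2 ^ (c + 1)] := by
  induction c with
  | zero => simpa using (Int.modEq_iff_dvd.mpr (dvd_sub hP dvd_rfl)).symm
  | succ c ih =>
    set V := lucasV P Q (2 ^ c)
    have hV : (2 : ℤ) ^ (c + 1) ∣ V - 2 := ih.symm.dvd
    have hV₂ : (2 : ℤ) ∣ V - 2 + 4 := (dvd_trans (dvd_pow_self 2 c.succ_ne_zero) hV).add (by norm_num)
    have hQ' : (2 : ℤ) ^ (c + 1) ∣ Q ^ 2 ^ c - 1 := by
      have := dvd_sub_pow_of_dvd_sub (p := 2) (by simpa using (hQ.sub_odd odd_one).two_dvd) c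
      rwa [one_pow, Nat.cast_ofNat] at this
    refine (Int.modEq_iff_dvd.mpr ?_).symm
    rw [(pow_succ' 2 c : 2 ^ (c + 1) = 2 * 2 ^ c), lucasV_two_mul,
      show V ^ 2 - 2 * Q ^ 2 ^ c - 2 = (V - 2) * (V - 2 + 4) - (Q ^ 2 ^ c - 1) * 2 by ring, pow_succ]
    exact (mul_dvd_mul hV hV₂).sub (mul_dvd_mul hQ' dvd_rfl)

lemma lucasU_lucasV_prime_pow_modEq (hp : p.Prime) (hpD : (p : ℤ) ∣ P ^ 2 - 4 * Q)
    (hPQ : ¬ ((p : ℤ) ∣ P ∧ (p : ℤ) ∣ Q)) (c : ℕ) :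
    lucasU (lucasV P Q (p ^ c)) (Q ^ p ^ c) p ≡ p [ZMOD p ^ (c + 1)] := by
  obtain rfl | hodd := hp.eq_two_or_odd'
  · have hP := two_dvd_of_two_dvd_discr (by exact_mod_cast hpD)
    have hQ : Odd Q := Int.not_even_iff_odd.mp fun hQ => hPQ ⟨by exact_mod_cast hP, by exact_mod_cast hQ.two_dvd⟩
    simpa using lucasV_two_pow_modEq hP hQ c
  refine lucasU_lucasV_pow_modEq_of_odd hp hodd hpD (fun hpP => hPQ ⟨hpP, ?_⟩) c
  have h4Q : (p : ℤ) ∣ 2 ^ 2 * Q := by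
    simpa using (dvd_pow hpP two_ne_zero).sub hpD
  exact (isCoprime_two_of_odd hodd).symm.pow_right.dvd_of_dvd_mul_left h4Q

end PrimePower

lemma mobiusDualU_prime_pow_succ (P Q : ℤ) {p : ℕ} (hp : p.Prime) (c : ℕ) :
    mobiusDualU P Q (p ^ (c + 1)) = lucasU P Q (p ^ (c + 1)) / lucasU P Q (p ^ c) := by
  rw [mobiusDualU, Nat.prod_divisors_prime_pow hp, Finset.prod_range_succ,
    Finset.prod_range_succ]
  have h1 : ∀ i ∈ Finset.range c,
      ((lucasU P Q (p ^ i) : ℚ)) ^ (ArithmeticFunction.moebius (p ^ (c + 1) / p ^ i)) = 1 := by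
    intro i hi
    rw [Finset.mem_range] at hi
    rw [Nat.pow_div (by omega) hp.pos,
      ArithmeticFunction.moebius_apply_prime_pow hp (by omega), if_neg (by omega), zpow_zero]
  rw [Finset.prod_congr rfl h1, Finset.prod_const_one, one_mul,
    Nat.pow_div (by omega) hp.pos, Nat.pow_div (by omega) hp.pos,
    show c + 1 - c = 1 by omega, Nat.sub_self, pow_one, pow_zero,
    ArithmeticFunction.moebius_apply_prime hp, ArithmeticFunction.moebius_apply_one,
    zpow_neg_one, zpow_one, div_eq_mul_inv, mul_comm]

theorem stmt_0_general (P Q : ℤ)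
    (hnd : ∀ m : ℕ, 1 ≤ m → lucasU P Q m ≠ 0)
    (p : ℕ) (hp : p.Prime) (hpD : (p : ℤ) ∣ (P ^ 2 - 4 * Q))
    (hpPQ : ¬ p ∣ Int.gcd P Q) (k : ℕ) (hk : 1 ≤ k) :
    ∃ t : ℤ, mobiusDualU P Q (p ^ k) = (p : ℚ) + (p : ℚ) ^ k * (t : ℚ) := by
  obtain ⟨c, rfl⟩ : ∃ c, k = c + 1 := ⟨k - 1, by omega⟩
  have hPQ : ¬ ((p : ℤ) ∣ P ∧ (p : ℤ) ∣ Q) := fun h =>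
    hpPQ (Int.natCast_dvd_natCast.mp (Int.dvd_coe_gcd h.1 h.2))
  obtain ⟨t, ht⟩ := (lucasU_lucasV_prime_pow_modEq hp hpD hPQ c).symm.dvd
  have hU : (lucasU P Q (p ^ c) : ℚ) ≠ 0 := by exact_mod_cast hnd _ (Nat.one_le_pow _ _ hp.pos)
  refine ⟨t, ?_⟩
  rw [mobiusDualU_prime_pow_succ P Q hp, pow_succ, lucasU_mul, Int.cast_mul,
    mul_div_cancel_left₀ _ hU, eq_add_of_sub_eq' ht]
  push_cast
  rfl

theorem stmt_0 (P Q : ℤ) (hP : P ≠ 0) (hQ : Q ≠ 0) (hD : P ^ 2 - 4 * Q ≠ 0)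
    (hnd : ∀ m : ℕ, 1 ≤ m → lucasU P Q m ≠ 0)
    (p : ℕ) (hp : p.Prime) (hpD : (p : ℤ) ∣ (P ^ 2 - 4 * Q))
    (hpPQ : ¬ p ∣ Int.gcd P Q) (k : ℕ) (hk : 1 ≤ k) :
    ∃ t : ℤ, mobiusDualU P Q (p ^ k) = (p : ℚ) + (p : ℚ) ^ k * (t : ℚ) :=
  stmt_0_general P Q hnd p hp hpD hpPQ k hk
end

section
/- Let P and Q be nonzero integers with D = P^2 - 4Q ≠ 0, let U = U(P,Q) be nondegenerate, and let p be a prime dividing both P and Q. Let n ≥ 1 satisfy gcd(p,n) = 1 and exclude the case where simultaneously p = 2, n = 1, and 2·v_2(P) > v_2(Q) (v_2 the 2-adic valuation). Then for every integer k ≥ 1, M^U_{p^k n} ≡ 0 (mod p^{p^{k-1}}); that is, there exists an integer t such that M^U_{p^k n} = p^{p^{k-1}}·t. -/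
/-!
Let `α, β` be the roots of `X ^ 2 - P X + Q` and `Φ_d(x, y)` the homogenized cyclotomic
polynomials. Since `(α - β) U_N = α ^ N - β ^ N = ∏_{d ∣ N} Φ_d(α, β)` and `Φ_1(α, β) = α - β`,
Möbius inversion gives `M_N = Φ_N(α, β)` for `N > 1`.

As `p` divides `α + β = P` and `αβ = Q`, it divides `α ^ 2`, `αβ` and `β ^ 2` among algebraic
integers, so `p ^ ⌊φ(N)/2⌋` divides the form `Φ_N(α, β)` of degree `φ(N)`; for `N = p ^ k n` this
exponent is at least `p ^ (k - 1)` unless `p = 2`, `n = 1`. In that case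
`Φ_{2^k}(α, β) = α ^ 2 ^ (k - 1) + β ^ 2 ^ (k - 1)`, and `2 ^ v ∣ α + β`, `4 ^ v ∣ αβ` with
`v = v_2(P) ≥ 1` make it divisible by `2 ^ (v 2 ^ (k - 1))`. Finally `M_N / p ^ p ^ (k - 1)` is a
rational algebraic integer, hence an integer.
-/

open Polynomial

noncomputable def homogenizedCyclotomic (n : ℕ) : MvPolynomial (Fin 2) ℤ :=
  (cyclotomic n ℤ).homogenize n.totient

lemma prod_homogenizedCyclotomic {N : ℕ} (hN : 0 < N) :
    ∏ d ∈ N.divisors, homogenizedCyclotomic d = .X 0 ^ N - .X 1 ^ N := by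
  unfold homogenizedCyclotomic
  rw [← homogenize_finsetProd fun d _ => (natDegree_cyclotomic d ℤ).le,
    prod_cyclotomic_eq_X_pow_sub_one hN, Nat.sum_totient, sub_eq_add_neg, ← neg_one_smul ℤ,
    homogenize_add, homogenize_smul, homogenize_X_pow le_rfl, homogenize_one]
  simp [sub_eq_add_neg]

lemma homogenizedCyclotomic_one : homogenizedCyclotomic 1 = .X 0 - .X 1 := by
  simp [homogenizedCyclotomic]

lemma homogenizedCyclotomic_two_pow (k : ℕ) :
    homogenizedCyclotomic (2 ^ (k + 1)) = .X 0 ^ 2 ^ k + .X 1 ^ 2 ^ k := by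
  rw [homogenizedCyclotomic, cyclotomic_prime_pow_eq_geom_sum Nat.prime_two,
    Nat.totient_prime_pow_succ Nat.prime_two]
  simp [Finset.sum_range_succ, add_comm]

section CommRing

variable {A : Type*} [CommRing A] {a b c : A}

lemma pow_dvd_pow_mul_pow (hsum : c ∣ a + b) (hprod : c ∣ a * b) (s t : ℕ) :
    c ^ ((s + t) / 2) ∣ a ^ s * b ^ t := by
  have hsq : ∀ {x y : A}, c ∣ x + y → c ∣ x * y → c ∣ x ^ 2 := fun {x y} h₁ h₂ => by
    simpa [sq, mul_add] using (dvd_sub (h₁.mul_left x) h₂)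
  have hexp : (s + t) / 2 = s / 2 + t / 2 + (s % 2 + t % 2) / 2 := by omega
  have hsplit : a ^ s * b ^ t =
      (a ^ 2) ^ (s / 2) * (b ^ 2) ^ (t / 2) * (a ^ (s % 2) * b ^ (t % 2)) := by
    conv_lhs => rw [← Nat.div_add_mod s 2, ← Nat.div_add_mod t 2]
    ring
  rw [hexp, hsplit, pow_add, pow_add]
  refine mul_dvd_mul (mul_dvd_mul (pow_dvd_pow_of_dvd (hsq hsum hprod) _)
    (pow_dvd_pow_of_dvd (hsq (add_comm a b ▸ hsum) (mul_comm a b ▸ hprod)) _)) ?_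
  rcases Nat.mod_two_eq_zero_or_one s with hs | hs <;>
    rcases Nat.mod_two_eq_zero_or_one t with ht | ht <;> simp [hs, ht, hprod]

lemma pow_half_dvd_aeval_homogenize (hsum : c ∣ a + b) (hprod : c ∣ a * b) (p : ℤ[X])
    (n : ℕ) : c ^ (n / 2) ∣ MvPolynomial.aeval ![a, b] (p.homogenize n) := by
  rw [homogenize, map_sum]
  refine Finset.dvd_sum fun kl hkl => ?_
  rw [Finset.HasAntidiagonal.mem_antidiagonal] at hkl
  rw [MvPolynomial.aeval_monomial, Finsupp.prod_fintype _ _ (by simp), Fin.prod_univ_two, ← hkl]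
  simpa using (pow_dvd_pow_mul_pow hsum hprod kl.1 kl.2).mul_left (algebraMap ℤ A (p.coeff kl.1))

lemma pow_dvd_pow_add_pow (hsum : c ∣ a + b) (hprod : c ^ 2 ∣ a * b) (m : ℕ) :
    c ^ m ∣ a ^ m + b ^ m := by
  induction m using Nat.twoStepInduction with
  | zero => simp
  | one => simpa using hsum
  | more m ih₀ ih₁ =>
    have hrec : a ^ (m + 2) + b ^ (m + 2) =
        (a + b) * (a ^ (m + 1) + b ^ (m + 1)) - a * b * (a ^ m + b ^ m) := by ring
    rw [hrec]
    refine dvd_sub ?_ ?_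
    · rw [show m + 2 = (m + 1) + 1 from rfl, pow_succ']
      exact mul_dvd_mul hsum ih₁
    · rw [pow_add, mul_comm]
      exact mul_dvd_mul hprod ih₀

lemma sub_mul_lucasU {P Q : ℤ} (hsum : a + b = P) (hprod : a * b = Q) (n : ℕ) :
    (a - b) * lucasU P Q n = a ^ n - b ^ n := by
  induction n using Nat.twoStepInduction with
  | zero => simp [lucasU]
  | one => simp [lucasU]
  | more m ih₀ ih₁ =>
    rw [lucasU, Int.cast_sub, Int.cast_mul, Int.cast_mul, ← hsum, ← hprod]
    linear_combination (a + b) * ih₁ - a * b * ih₀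

end CommRing

section Field

variable {K : Type*} [Field K] {a b : K} {P Q : ℤ}

lemma lucasU_eq_prod_aeval (hab : a ≠ b) (hsum : a + b = P) (hprod : a * b = Q) {N : ℕ}
    (hN : 0 < N) :
    (lucasU P Q N : K) =
      ∏ d ∈ N.divisors.erase 1, MvPolynomial.aeval ![a, b] (homogenizedCyclotomic d) := by
  refine mul_left_cancel₀ (sub_ne_zero.mpr hab) ?_
  have hall := congrArg (MvPolynomial.aeval ![a, b]) (prod_homogenizedCyclotomic hN)
  rw [map_prod, ← Finset.mul_prod_erase _ _ (Nat.one_mem_divisors.mpr hN.ne'),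
    homogenizedCyclotomic_one] at hall
  simpa [sub_mul_lucasU hsum hprod] using hall.symm

lemma mobiusDualU_eq_aeval [CharZero K] (hnd : ∀ m : ℕ, 1 ≤ m → lucasU P Q m ≠ 0)
    (hab : a ≠ b) (hsum : a + b = P) (hprod : a * b = Q) {N : ℕ} (hN : 1 < N) :
    (mobiusDualU P Q N : K) = MvPolynomial.aeval ![a, b] (homogenizedCyclotomic N) := by
  set f : ℕ → K := fun d =>
    if d = 1 then 1 else MvPolynomial.aeval ![a, b] (homogenizedCyclotomic d)
  have hU : ∀ n > 0, ∏ d ∈ n.divisors, f d = (lucasU P Q n : K) := by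
    intro n hn
    rw [lucasU_eq_prod_aeval hab hsum hprod hn, ← Finset.prod_erase (a := 1) _ (by simp [f])]
    exact Finset.prod_congr rfl fun d hd => if_neg (Finset.ne_of_mem_erase hd)
  have hU0 : ∀ n : ℕ, 0 < n → (lucasU P Q n : K) ≠ 0 := fun n hn => by exact_mod_cast hnd n hn
  have hf0 : ∀ n : ℕ, 0 < n → f n ≠ 0 := fun n hn =>
    Finset.prod_ne_zero_iff.mp (hU n hn ▸ hU0 n hn) n (Nat.mem_divisors_self n hn.ne')
  have hinv := (ArithmeticFunction.prod_eq_iff_prod_pow_moebius_eq_of_nonzero hf0 hU0).mp hU N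
    (by omega)
  rw [Nat.prod_divisorsAntidiagonal'
    (f := fun i d => (lucasU P Q d : K) ^ ArithmeticFunction.moebius i)] at hinv
  simp only [mobiusDualU, Rat.cast_prod, Rat.cast_zpow, Rat.cast_intCast]
  simpa [f, hN.ne'] using hinv

end Field

lemma exists_add_eq_and_mul_eq {K : Type*} [Field K] [IsAlgClosed K] [CharZero K] {P Q : ℤ}
    (hD : P ^ 2 - 4 * Q ≠ 0) : ∃ a b : K, a + b = P ∧ a * b = Q ∧ a ≠ b := by
  obtain ⟨s, hs⟩ := IsAlgClosed.exists_eq_mul_self ((P ^ 2 - 4 * Q : ℤ) : K)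
  have hs0 : s ≠ 0 := by
    rintro rfl
    exact hD (by exact_mod_cast hs.trans (mul_zero 0))
  refine ⟨(P + s) / 2, (P - s) / 2, by ring, ?_, ?_⟩
  · push_cast at hs
    linear_combination (1 / 4 : K) * hs
  · intro h
    exact hs0 (by linear_combination h)

lemma isIntegral_of_add_eq_of_mul_eq {A : Type*} [CommRing A] {a b : A} {P Q : ℤ}
    (hsum : a + b = P) (hprod : a * b = Q) : IsIntegral ℤ a := by
  refine ⟨X ^ 2 - C P * X + C Q, by monicity!, ?_⟩
  simp only [eval₂_add, eval₂_sub, eval₂_mul, eval₂_X_pow, eval₂_X, eval₂_C, algebraMap_int_eq,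
    Int.coe_castRingHom]
  linear_combination a * hsum - hprod

lemma Rat.exists_int_eq_of_isIntegral {K : Type*} [Field K] [CharZero K] {q : ℚ}
    (h : IsIntegral ℤ (q : K)) : ∃ t : ℤ, q = t := by
  obtain ⟨t, ht⟩ := IsIntegrallyClosed.isIntegral_iff.mp
    ((isIntegral_algebraMap_iff (algebraMap ℚ K).injective).mp h)
  exact ⟨t, by simpa using ht.symm⟩

lemma pow_le_totient_div_two {p n k : ℕ} (hp : p.Prime) (hn : 1 ≤ n) (hpn : p.gcd n = 1)
    (hk : 1 ≤ k) (h : ¬(p = 2 ∧ n = 1)) : p ^ (k - 1) ≤ (p ^ k * n).totient / 2 := by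
  have htot : (p ^ k * n).totient = p ^ (k - 1) * ((p - 1) * n.totient) := by
    rw [Nat.totient_mul (Nat.Coprime.pow_left k hpn), Nat.totient_prime_pow hp (by omega),
      mul_assoc]
  have hφ : 0 < n.totient := Nat.totient_pos.mpr hn
  have htwo : 2 ≤ (p - 1) * n.totient := by
    rcases eq_or_ne p 2 with rfl | hp2
    · have hn2 : n ≠ 2 := by rintro rfl; norm_num at hpn
      obtain ⟨r, hr⟩ := Nat.totient_even (show 2 < n by omega)
      omega
    · simpa using Nat.mul_le_mul (show 2 ≤ p - 1 by have := hp.two_le; omega) hφ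
  rw [htot, Nat.le_div_iff_mul_le two_pos]
  exact Nat.mul_le_mul_left _ htwo

section Divisibility

variable {A : Type*} [CommRing A] {a b : A} {P Q : ℤ}

lemma two_pow_two_pow_dvd_pow_add_pow (hP : P ≠ 0) (h2P : (2 : ℤ) ∣ P)
    (hv : 2 * padicValInt 2 P ≤ padicValInt 2 Q) (hsum : a + b = P) (hprod : a * b = Q)
    (k : ℕ) : (2 : A) ^ 2 ^ k ∣ a ^ 2 ^ k + b ^ 2 ^ k := by
  set v := padicValInt 2 P
  have hv1 : v ≠ 0 := by
    have := (padicValInt_dvd_iff (p := 2) 1 P).mp (by simpa using h2P)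
    omega
  have hPv : (2 : A) ^ v ∣ a + b := by
    rw [hsum]; exact_mod_cast Int.cast_dvd_cast _ _ (padicValInt_dvd P)
  have hQv : ((2 : A) ^ v) ^ 2 ∣ a * b := by
    rw [hprod, ← pow_mul, mul_comm]
    exact_mod_cast Int.cast_dvd_cast _ _ ((pow_dvd_pow 2 hv).trans (padicValInt_dvd Q))
  refine (pow_dvd_pow_of_dvd (dvd_pow_self 2 hv1) _).trans ?_
  exact pow_dvd_pow_add_pow hPv hQv _

lemma pow_dvd_aeval_homogenizedCyclotomic (hP : P ≠ 0) (hsum : a + b = P) (hprod : a * b = Q)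
    {p : ℕ} (hp : p.Prime) (hpP : (p : ℤ) ∣ P) (hpQ : (p : ℤ) ∣ Q)
    {n : ℕ} (hn : 1 ≤ n) (hpn : p.gcd n = 1)
    (hexc : ¬ (p = 2 ∧ n = 1 ∧ 2 * padicValInt 2 P > padicValInt 2 Q)) {k : ℕ} (hk : 1 ≤ k) :
    (p : A) ^ p ^ (k - 1) ∣ MvPolynomial.aeval ![a, b] (homogenizedCyclotomic (p ^ k * n)) := by
  by_cases hcase : p = 2 ∧ n = 1
  · obtain ⟨rfl, rfl⟩ := hcase
    obtain ⟨j, rfl⟩ : ∃ j, k = j + 1 := ⟨k - 1, by omega⟩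
    simpa [homogenizedCyclotomic_two_pow] using
      two_pow_two_pow_dvd_pow_add_pow hP hpP (by simpa using hexc) hsum hprod j
  · have hsum' : (p : A) ∣ a + b := hsum ▸ by exact_mod_cast Int.cast_dvd_cast _ _ hpP
    have hprod' : (p : A) ∣ a * b := hprod ▸ by exact_mod_cast Int.cast_dvd_cast _ _ hpQ
    exact (pow_dvd_pow _ (pow_le_totient_div_two hp hn hpn hk hcase)).trans
      (pow_half_dvd_aeval_homogenize hsum' hprod' _ _)

end Divisibility

theorem stmt_6_general (P Q : ℤ) (hP : P ≠ 0) (hD : P ^ 2 - 4 * Q ≠ 0)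
    (hnd : ∀ m : ℕ, 1 ≤ m → lucasU P Q m ≠ 0)
    (p : ℕ) (hp : p.Prime) (hpP : (p : ℤ) ∣ P) (hpQ : (p : ℤ) ∣ Q)
    (n : ℕ) (hn : 1 ≤ n) (hpn : Nat.gcd p n = 1)
    (hexc : ¬ (p = 2 ∧ n = 1 ∧ 2 * padicValInt 2 P > padicValInt 2 Q))
    (k : ℕ) (hk : 1 ≤ k) :
    ∃ t : ℤ, mobiusDualU P Q (p ^ k * n) = (p : ℚ) ^ (p ^ (k - 1)) * (t : ℚ) := by
  obtain ⟨α, β, hsum, hprod, hne⟩ := exists_add_eq_and_mul_eq (K := ℂ) hD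
  let a : integralClosure ℤ ℂ := ⟨α, isIntegral_of_add_eq_of_mul_eq hsum hprod⟩
  let b : integralClosure ℤ ℂ :=
    ⟨β, isIntegral_of_add_eq_of_mul_eq ((add_comm β α).trans hsum) ((mul_comm β α).trans hprod)⟩
  obtain ⟨s, hs⟩ := pow_dvd_aeval_homogenizedCyclotomic (a := a) (b := b) hP
    (Subtype.ext (by simpa using hsum)) (Subtype.ext (by simpa using hprod))
    hp hpP hpQ hn hpn hexc hk
  have hN : 1 < p ^ k * n :=
    one_lt_mul_of_lt_of_le (Nat.one_lt_pow (by omega) hp.one_lt) hn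
  have hM : (mobiusDualU P Q (p ^ k * n) : ℂ) = (p : ℂ) ^ p ^ (k - 1) * s := by
    have hval : (fun i => (integralClosure ℤ ℂ).val (![a, b] i)) = ![α, β] := by
      ext i; fin_cases i <;> rfl
    rw [mobiusDualU_eq_aeval hnd hne hsum hprod hN, ← hval, ← MvPolynomial.comp_aeval_apply, hs]
    simp
  have hp0 : (p : ℚ) ≠ 0 := by exact_mod_cast hp.ne_zero
  have hq : ((mobiusDualU P Q (p ^ k * n) / p ^ p ^ (k - 1) : ℚ) : ℂ) = s := by
    push_cast
    rw [hM, mul_div_cancel_left₀ _ (pow_ne_zero _ (Nat.cast_ne_zero.mpr hp.ne_zero))]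
  obtain ⟨t, ht⟩ := Rat.exists_int_eq_of_isIntegral (hq ▸ s.2)
  exact ⟨t, by rw [← ht]; field_simp⟩

theorem stmt_6 (P Q : ℤ) (hP : P ≠ 0) (hQ : Q ≠ 0) (hD : P ^ 2 - 4 * Q ≠ 0)
    (hnd : ∀ m : ℕ, 1 ≤ m → lucasU P Q m ≠ 0)
    (p : ℕ) (hp : p.Prime) (hpP : (p : ℤ) ∣ P) (hpQ : (p : ℤ) ∣ Q)
    (n : ℕ) (hn : 1 ≤ n) (hpn : Nat.gcd p n = 1)
    (hexc : ¬ (p = 2 ∧ n = 1 ∧ 2 * padicValInt 2 P > padicValInt 2 Q))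
    (k : ℕ) (hk : 1 ≤ k) :
    ∃ t : ℤ, mobiusDualU P Q (p ^ k * n) = (p : ℚ) ^ (p ^ (k - 1)) * (t : ℚ) :=
  stmt_6_general P Q hP hD hnd p hp hpP hpQ n hn hpn hexc k hk
end

section
/- Let P and Q be nonzero integers with D = P^2 - 4Q ≠ 0, let U = U(P,Q) be nondegenerate, and let p be an odd prime with p ∤ D and p ∤ gcd(P,Q). Let n ≥ 1 satisfy gcd(p,n) = 1 and p ∤ U_n (equivalently, the entry point of p in U does not divide n). Then for every k ≥ 1 there exists an integer t such that U_{p^k n} = ((D/p) + p^k·t)·U_{p^{k-1} n}, where (D/p) is the Legendre symbol. -/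
set_option maxHeartbeats 1000000
set_option synthInstance.maxHeartbeats 400000


namespace StmtAux11

variable (P Q : ℤ)

lemma lucasU_rec (n : ℕ) :
    lucasU P Q (n + 2) = P * lucasU P Q (n + 1) - Q * lucasU P Q n := by
  simp [lucasU]

/-- Companion (Lucas sequence of the second kind, via `V n = 2 U (n+1) - P U n`). -/
def lucasV (n : ℕ) : ℤ := 2 * lucasU P Q (n + 1) - P * lucasU P Q n

lemma add_index : ∀ a b : ℕ, lucasU P Q (b + a + 1)
    = lucasU P Q (a + 1) * lucasU P Q (b + 1) - Q * lucasU P Q a * lucasU P Q b := by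
  intro a
  induction a using Nat.twoStepInduction with
  | zero => intro b; simp [lucasU]
  | one =>
      intro b
      have h2 : lucasU P Q 2 = P := by simp [lucasU]
      rw [show b + 1 + 1 = b + 2 from rfl, lucasU_rec, h2]
      simp [lucasU]
  | more a ih1 ih2 =>
      intro b
      have e1 : b + (a + 2) + 1 = (b + a + 1) + 2 := by omega
      have e2 : (b + a + 1) + 1 = b + (a + 1) + 1 := by omega
      rw [e1, lucasU_rec, e2, ih2, ih1, lucasU_rec P Q (a + 1), lucasU_rec P Q a]
      ring

lemma dvd_mul_index (m : ℕ) : ∀ n : ℕ, lucasU P Q m ∣ lucasU P Q (m * n) := by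
  intro n
  induction n with
  | zero => simp [lucasU]
  | succ n ih =>
      rcases Nat.eq_zero_or_pos m with hm | hm
      · simp [hm, lucasU]
      · obtain ⟨a, rfl⟩ : ∃ a, m = a + 1 := ⟨m - 1, by omega⟩
        have e : (a + 1) * (n + 1) = (a + 1) * n + (a + 1) := by ring
        rw [e, show (a + 1) * n + (a + 1) = (a + 1) * n + a + 1 by omega, add_index]
        exact dvd_sub (Dvd.dvd.mul_right dvd_rfl _) (ih.mul_left _)

lemma pow_gamma : ∀ m : ℕ, (⟨P, 1⟩ : ℤ√(P ^ 2 - 4 * Q)) ^ m * 2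
    = ⟨2 ^ m * lucasV P Q m, 2 ^ m * lucasU P Q m⟩ := by
  intro m
  induction m with
  | zero =>
      ext <;> simp [lucasV, lucasU]
  | succ m ih =>
      have step : (⟨P, 1⟩ : ℤ√(P ^ 2 - 4 * Q)) ^ (m + 1) * 2
          = ((⟨P, 1⟩ : ℤ√(P ^ 2 - 4 * Q)) ^ m * 2) * ⟨P, 1⟩ := by ring
      rw [step, ih]
      have hrec := lucasU_rec P Q m
      ext
      · simp only [Zsqrtd.re_mul, lucasV, hrec]
        ring
      · simp only [Zsqrtd.im_mul, lucasV]
        ring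

lemma pow_delta (m : ℕ) : (⟨P, -1⟩ : ℤ√(P ^ 2 - 4 * Q)) ^ m * 2
    = ⟨2 ^ m * lucasV P Q m, -(2 ^ m * lucasU P Q m)⟩ := by
  induction m with
  | zero =>
      ext <;> simp [lucasV, lucasU]
  | succ m ih =>
      have step : (⟨P, -1⟩ : ℤ√(P ^ 2 - 4 * Q)) ^ (m + 1) * 2
          = ((⟨P, -1⟩ : ℤ√(P ^ 2 - 4 * Q)) ^ m * 2) * ⟨P, -1⟩ := by ring
      rw [step, ih]
      have hrec := lucasU_rec P Q m
      ext
      · simp only [Zsqrtd.re_mul, lucasV, hrec]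
        ring
      · simp only [Zsqrtd.im_mul, lucasV]
        ring

/-- Frobenius congruence: `γ^p ≡ ⟨x, ε⟩ (mod p)` in `ℤ√d`, where `ε` is the
Legendre symbol of `d` at `p`. -/
lemma frob (d x : ℤ) (p : ℕ) [hfp : Fact p.Prime] (hodd : Odd p) :
    ((p : ℤ) : ℤ√d) ∣ (⟨x, 1⟩ : ℤ√d) ^ p - ⟨x, legendreSym p d⟩ := by
  have hp := hfp.out
  have hmem : ∀ z : ℤ√d, z ∈ Ideal.span {((p : ℤ) : ℤ√d)} ↔ ((p : ℤ) : ℤ√d) ∣ z := by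
    intro z; rw [Ideal.mem_span_singleton]
  haveI hchar : CharP ((ℤ√d) ⧸ Ideal.span {((p : ℤ) : ℤ√d)}) p := by
    constructor
    intro n
    rw [← map_natCast (Ideal.Quotient.mk (Ideal.span {((p : ℤ) : ℤ√d)})) n,
      Ideal.Quotient.eq_zero_iff_mem, hmem]
    have h2 : ((n : ℤ) : ℤ√d) = (n : ℤ√d) := by push_cast; ring
    rw [← h2, Zsqrtd.intCast_dvd_intCast, Int.natCast_dvd_natCast]
  have hcongr : ∀ a b : ℤ, (p : ℤ) ∣ a - b →
      Ideal.Quotient.mk (Ideal.span {((p : ℤ) : ℤ√d)}) ((a : ℤ√d))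
        = Ideal.Quotient.mk (Ideal.span {((p : ℤ) : ℤ√d)}) ((b : ℤ√d)) := by
    intro a b hab
    rw [Ideal.Quotient.eq, hmem]
    have h3 : ((a : ℤ√d)) - ((b : ℤ√d)) = (((a - b : ℤ)) : ℤ√d) := by push_cast; ring
    rw [h3]
    exact (Zsqrtd.intCast_dvd_intCast _ _).mpr hab
  have hgamma : (⟨x, 1⟩ : ℤ√d) = ((x : ℤ) : ℤ√d) + Zsqrtd.sqrtd * ((1 : ℤ) : ℤ√d) :=
    Zsqrtd.decompose
  have heps : (⟨x, legendreSym p d⟩ : ℤ√d)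
      = ((x : ℤ) : ℤ√d) + Zsqrtd.sqrtd * ((legendreSym p d : ℤ) : ℤ√d) :=
    Zsqrtd.decompose
  have hsqq : ∀ q : ℕ, (Zsqrtd.sqrtd : ℤ√d) ^ (2 * q + 1) = ((d ^ q : ℤ) : ℤ√d) * Zsqrtd.sqrtd := by
    intro q
    induction q with
    | zero => simp
    | succ q ihq =>
        have e : 2 * (q + 1) + 1 = (2 * q + 1) + 2 := by ring
        rw [e, pow_add, ihq, sq, Zsqrtd.dmuld]
        push_cast
        ring
  have hps : 2 * (p / 2) + 1 = p := by
    rcases hodd with ⟨c, hc⟩; omega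
  have hsq : (Zsqrtd.sqrtd : ℤ√d) ^ p = ((d ^ (p / 2) : ℤ) : ℤ√d) * Zsqrtd.sqrtd := by
    have h := hsqq (p / 2)
    rwa [hps] at h
  have key : Ideal.Quotient.mk (Ideal.span {((p : ℤ) : ℤ√d)}) ((⟨x, 1⟩ : ℤ√d) ^ p)
      = Ideal.Quotient.mk (Ideal.span {((p : ℤ) : ℤ√d)}) (⟨x, legendreSym p d⟩ : ℤ√d) := by
    rw [map_pow, hgamma, heps, map_add, map_add, map_mul, map_mul, add_pow_char]
    congr 1
    · rw [← map_pow]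
      have h4 : (((x : ℤ) : ℤ√d)) ^ p = (((x ^ p : ℤ)) : ℤ√d) := by push_cast; ring
      rw [h4]
      apply hcongr
      have h5 : ((x ^ p - x : ℤ) : ZMod p) = 0 := by
        push_cast
        rw [ZMod.pow_card]
        ring
      exact_mod_cast (ZMod.intCast_zmod_eq_zero_iff_dvd _ p).mp h5
    · rw [mul_pow, ← map_pow, ← map_pow]
      have h6 : (((1 : ℤ) : ℤ√d)) ^ p = ((1 : ℤ) : ℤ√d) := by norm_num
      rw [h6, hsq, map_mul]
      have h8 : Ideal.Quotient.mk (Ideal.span {((p : ℤ) : ℤ√d)}) (((d ^ (p / 2) : ℤ)) : ℤ√d)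
          = Ideal.Quotient.mk (Ideal.span {((p : ℤ) : ℤ√d)}) (((legendreSym p d : ℤ)) : ℤ√d) := by
        apply hcongr
        have h9 : ((d ^ (p / 2) - legendreSym p d : ℤ) : ZMod p) = 0 := by
          rw [Int.cast_sub, Int.cast_pow, ← legendreSym.eq_pow, sub_self]
        exact_mod_cast (ZMod.intCast_zmod_eq_zero_iff_dvd _ p).mp h9
      rw [h8]
      simp [mul_comm]
  rw [← hmem, ← Ideal.Quotient.eq]
  exact key

/-- The key congruence: `p^j ∣ U (p^j n) - ε · U (p^(j-1) n)` for `j ≥ 1`. -/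
lemma cong (p : ℕ) [hfp : Fact p.Prime] (hodd : Odd p)
    (hpD : ¬ (p : ℤ) ∣ (P ^ 2 - 4 * Q)) (n j : ℕ) (hj : 1 ≤ j) :
    ((p : ℤ)) ^ j ∣ lucasU P Q (p ^ j * n)
      - legendreSym p (P ^ 2 - 4 * Q) * lucasU P Q (p ^ (j - 1) * n) := by
  have hp := hfp.out
  set ε : ℤ := legendreSym p (P ^ 2 - 4 * Q) with hε
  have hfrob := frob (P ^ 2 - 4 * Q) P p hodd
  rw [← hε] at hfrob
  -- generic lifting statement
  have hlift : ∀ x y : ℤ√(P ^ 2 - 4 * Q), ((p : ℤ) : ℤ√(P ^ 2 - 4 * Q)) ∣ x ^ p - y →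
      ((p : ℤ)) ^ j ∣ (Zsqrtd.im ((x ^ (p ^ j * n) - y ^ (p ^ (j - 1) * n)) * 2)) := by
    intro x y hxy
    have h1 : (((p : ℕ) : ℤ√(P ^ 2 - 4 * Q)) ^ j) ∣
        (x ^ p) ^ (p ^ (j - 1)) - y ^ (p ^ (j - 1)) := by
      have h0 : ((p : ℕ) : ℤ√(P ^ 2 - 4 * Q)) ∣ x ^ p - y := by exact_mod_cast hxy
      have := dvd_sub_pow_of_dvd_sub h0 (j - 1)
      rwa [show j - 1 + 1 = j by omega] at this
    have h2 := (sub_dvd_pow_sub_pow ((x ^ p) ^ (p ^ (j - 1))) (y ^ (p ^ (j - 1))) n)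
    have h4 := h1.trans h2
    have hj1 : j - 1 + 1 = j := by omega
    have e1 : ((x ^ p) ^ (p ^ (j - 1))) ^ n = x ^ (p ^ j * n) := by
      rw [← pow_mul, ← pow_mul]
      congr 1
      rw [← mul_assoc, ← pow_succ', hj1]
    have e2 : (y ^ (p ^ (j - 1))) ^ n = y ^ (p ^ (j - 1) * n) := by
      rw [← pow_mul]
    rw [e1, e2] at h4
    have h5 : (((p ^ j : ℤ)) : ℤ√(P ^ 2 - 4 * Q)) ∣ (x ^ (p ^ j * n) - y ^ (p ^ (j - 1) * n)) * 2 := by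
      have h6 := h4.mul_right 2
      have h7 : (((p ^ j : ℤ)) : ℤ√(P ^ 2 - 4 * Q))
          = ((p : ℕ) : ℤ√(P ^ 2 - 4 * Q)) ^ j := by push_cast; ring
      rw [h7]
      exact h6
    exact ((Zsqrtd.intCast_dvd _ _).mp h5).2
  have hεpm : ε = 1 ∨ ε = -1 := by
    rw [hε]
    apply legendreSym.eq_one_or_neg_one
    rw [Ne, ZMod.intCast_zmod_eq_zero_iff_dvd]
    exact hpD
  -- in both cases, the same integer divisibility
  have him : ((p : ℤ)) ^ j ∣ 2 ^ (p ^ j * n) * lucasU P Q (p ^ j * n)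
      - ε * (2 ^ (p ^ (j - 1) * n) * lucasU P Q (p ^ (j - 1) * n)) := by
    rcases hεpm with h1 | h1
    · rw [h1] at hfrob ⊢
      have h := hlift ⟨P, 1⟩ ⟨P, 1⟩ hfrob
      rw [sub_mul, pow_gamma, pow_gamma] at h
      simpa using h
    · rw [h1] at hfrob ⊢
      have h := hlift ⟨P, 1⟩ ⟨P, -1⟩ hfrob
      rw [sub_mul, pow_gamma, pow_delta] at h
      have e : (⟨2 ^ (p ^ j * n) * lucasV P Q (p ^ j * n),
            2 ^ (p ^ j * n) * lucasU P Q (p ^ j * n)⟩ -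
          ⟨2 ^ (p ^ (j - 1) * n) * lucasV P Q (p ^ (j - 1) * n),
            -(2 ^ (p ^ (j - 1) * n) * lucasU P Q (p ^ (j - 1) * n))⟩ :
          ℤ√(P ^ 2 - 4 * Q)).im
          = 2 ^ (p ^ j * n) * lucasU P Q (p ^ j * n)
            + 2 ^ (p ^ (j - 1) * n) * lucasU P Q (p ^ (j - 1) * n) := by
        simp
      rw [e] at h
      have e2 : 2 ^ (p ^ j * n) * lucasU P Q (p ^ j * n) -
          -1 * (2 ^ (p ^ (j - 1) * n) * lucasU P Q (p ^ (j - 1) * n))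
          = 2 ^ (p ^ j * n) * lucasU P Q (p ^ j * n)
            + 2 ^ (p ^ (j - 1) * n) * lucasU P Q (p ^ (j - 1) * n) := by ring
      rw [e2]
      exact h
  -- Euler: 2^(m1-m0) ≡ 1 mod p^j
  have hm0le : p ^ (j - 1) * n ≤ p ^ j * n :=
    Nat.mul_le_mul_right n (Nat.pow_le_pow_right hp.one_lt.le (by omega))
  have heuler : ((p : ℤ)) ^ j ∣ 2 ^ (p ^ j * n - p ^ (j - 1) * n) - 1 := by
    have hcop : Nat.Coprime 2 (p ^ j) := by
      apply Nat.Coprime.pow_right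
      rw [Nat.coprime_comm]
      refine (Nat.Prime.coprime_iff_not_dvd hp).mpr ?_
      intro h2
      have hp2 := (Nat.prime_dvd_prime_iff_eq hp Nat.prime_two).mp h2
      rcases hodd with ⟨c, hc⟩
      omega
    have ht := Nat.ModEq.pow_totient hcop
    have hdvd : Nat.totient (p ^ j) ∣ p ^ j * n - p ^ (j - 1) * n := by
      rw [Nat.totient_prime_pow hp (by omega : 0 < j)]
      have e : p ^ j * n - p ^ (j - 1) * n = (p ^ (j - 1) * (p - 1)) * n := by
        have hpj : p ^ j = p ^ (j - 1) * p := by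
          rw [← pow_succ]
          congr 1
          omega
        rw [hpj, ← Nat.sub_mul]
        congr 1
        rw [Nat.mul_sub, Nat.mul_one]
      rw [e]
      exact Dvd.intro n rfl
    obtain ⟨c, hcc⟩ := hdvd
    have hmod : (2 : ℕ) ^ (p ^ j * n - p ^ (j - 1) * n) ≡ 1 [MOD p ^ j] := by
      rw [hcc, pow_mul]
      calc (2 ^ Nat.totient (p ^ j)) ^ c ≡ 1 ^ c [MOD p ^ j] := ht.pow c
        _ = 1 := one_pow c
    have hd := hmod.dvd
    have h2 : ((p ^ j : ℕ) : ℤ) ∣ ((1 : ℕ) : ℤ) - ((2 ^ (p ^ j * n - p ^ (j - 1) * n) : ℕ) : ℤ) :=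
      hd
    push_cast at h2 ⊢
    rw [show ((2:ℤ) ^ (p ^ j * n - p ^ (j - 1) * n) - 1) = -((1:ℤ) - 2 ^ (p ^ j * n - p ^ (j - 1) * n)) by ring]
    exact h2.neg_right
  -- combine
  have key : ((p : ℤ)) ^ j ∣ 2 ^ (p ^ (j - 1) * n) *
      (lucasU P Q (p ^ j * n) - ε * lucasU P Q (p ^ (j - 1) * n)) := by
    have e : (2:ℤ) ^ (p ^ (j - 1) * n) *
        (lucasU P Q (p ^ j * n) - ε * lucasU P Q (p ^ (j - 1) * n))
        = (2 ^ (p ^ j * n) * lucasU P Q (p ^ j * n)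
            - ε * (2 ^ (p ^ (j - 1) * n) * lucasU P Q (p ^ (j - 1) * n)))
          - (2 ^ (p ^ j * n - p ^ (j - 1) * n) - 1)
            * (2 ^ (p ^ (j - 1) * n) * lucasU P Q (p ^ j * n)) := by
      have h2 : (2:ℤ) ^ (p ^ j * n) = 2 ^ (p ^ j * n - p ^ (j - 1) * n) * 2 ^ (p ^ (j - 1) * n) := by
        rw [← pow_add]
        congr 1
        omega
      rw [h2]
      ring
    rw [e]
    exact dvd_sub him (heuler.mul_right _)
  have hpint : Prime (p : ℤ) := Int.prime_iff_natAbs_prime.mpr (by simpa using hp)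
  have hp2 : ¬ (p : ℤ) ∣ 2 := by
    intro h
    have : (p : ℤ) ∣ ((2 : ℕ) : ℤ) := by exact_mod_cast h
    have hpd : p ∣ 2 := Int.natCast_dvd_natCast.mp this
    have hp2' := (Nat.prime_dvd_prime_iff_eq hp Nat.prime_two).mp hpd
    rcases hodd with ⟨c, hc⟩
    omega
  have cop : IsCoprime ((p : ℤ) ^ j) ((2 : ℤ) ^ (p ^ (j - 1) * n)) :=
    ((hpint.coprime_iff_not_dvd.mpr hp2).pow : _)
  exact cop.dvd_of_dvd_mul_left key

/-- `p` never divides `U (p^j n)` when it does not divide `U n`. -/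
lemma notdvd (p : ℕ) [hfp : Fact p.Prime] (hodd : Odd p)
    (hpD : ¬ (p : ℤ) ∣ (P ^ 2 - 4 * Q)) (n : ℕ)
    (hpUn : ¬ (p : ℤ) ∣ lucasU P Q n) :
    ∀ j : ℕ, ¬ (p : ℤ) ∣ lucasU P Q (p ^ j * n) := by
  intro j
  induction j with
  | zero => simpa using hpUn
  | succ j ih =>
      intro hdvd
      have hc := cong P Q p hodd hpD n (j + 1) (by omega)
      rw [Nat.add_sub_cancel] at hc
      have h1 : (p : ℤ) ∣ lucasU P Q (p ^ (j + 1) * n)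
          - legendreSym p (P ^ 2 - 4 * Q) * lucasU P Q (p ^ j * n) :=
        (dvd_pow_self (p : ℤ) (by omega : j + 1 ≠ 0)).trans hc
      have h2 : (p : ℤ) ∣ legendreSym p (P ^ 2 - 4 * Q) * lucasU P Q (p ^ j * n) := by
        have h3 := dvd_sub hdvd h1
        rwa [sub_sub_cancel] at h3
      have hεpm : legendreSym p (P ^ 2 - 4 * Q) = 1 ∨ legendreSym p (P ^ 2 - 4 * Q) = -1 := by
        apply legendreSym.eq_one_or_neg_one
        rw [Ne, ZMod.intCast_zmod_eq_zero_iff_dvd]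
        exact hpD
      rcases hεpm with h | h <;> rw [h] at h2
      · rw [one_mul] at h2
        exact ih h2
      · rw [neg_one_mul, dvd_neg] at h2
        exact ih h2

end StmtAux11

theorem stmt_11 (P Q : ℤ) (hP : P ≠ 0) (hQ : Q ≠ 0) (hD : P ^ 2 - 4 * Q ≠ 0)
    (hnd : ∀ m : ℕ, 1 ≤ m → lucasU P Q m ≠ 0)
    (p : ℕ) (hp : p.Prime) (hodd : Odd p) (hpD : ¬ (p : ℤ) ∣ (P ^ 2 - 4 * Q))
    (hpPQ : ¬ p ∣ Int.gcd P Q)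
    (n : ℕ) (hn : 1 ≤ n) (hpn : Nat.gcd p n = 1)
    (hpUn : ¬ (p : ℤ) ∣ lucasU P Q n) (k : ℕ) (hk : 1 ≤ k) :
    ∃ t : ℤ, lucasU P Q (p ^ k * n)
      = (jacobiSym (P ^ 2 - 4 * Q) p + (p : ℤ) ^ k * t) * lucasU P Q (p ^ (k - 1) * n) := by
  haveI := Fact.mk hp
  have hjac : jacobiSym (P ^ 2 - 4 * Q) p = legendreSym p (P ^ 2 - 4 * Q) :=
    (jacobiSym.legendreSym.to_jacobiSym p _).symm
  obtain ⟨c, hc⟩ := StmtAux11.cong P Q p hodd hpD n k hk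
  have hm : p ^ (k - 1) * n * p = p ^ k * n := by
    rw [mul_right_comm, ← pow_succ]
    congr 2
    omega
  have hdvd : lucasU P Q (p ^ (k - 1) * n) ∣ lucasU P Q (p ^ k * n) := by
    rw [← hm]
    exact StmtAux11.dvd_mul_index P Q _ p
  have hnd0 : ¬ (p : ℤ) ∣ lucasU P Q (p ^ (k - 1) * n) :=
    StmtAux11.notdvd P Q p hodd hpD n hpUn (k - 1)
  have hdc : lucasU P Q (p ^ (k - 1) * n) ∣ (p : ℤ) ^ k * c := by
    rw [← hc]
    exact dvd_sub hdvd (Dvd.dvd.mul_left dvd_rfl _)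
  have hpint : Prime (p : ℤ) := Int.prime_iff_natAbs_prime.mpr (by simpa using hp)
  have cop : IsCoprime (lucasU P Q (p ^ (k - 1) * n)) ((p : ℤ) ^ k) :=
    ((hpint.coprime_iff_not_dvd.mpr hnd0).symm.pow_right : _)
  obtain ⟨t, ht⟩ := cop.dvd_of_dvd_mul_left hdc
  refine ⟨t, ?_⟩
  rw [hjac]
  linear_combination hc + (p : ℤ) ^ k * ht
end

section
/- Let p be a prime and let ζ and n be integers with n ≥ 1, p ∤ ζ and p ∤ n. Suppose that n is not equal to the multiplicative order of ζ modulo p (the order of the image of ζ in (ℤ/pℤ)^×). Then for every integer k ≥ 1, p^k divides Φ_{p^k n}(ζ) − 1, where Φ_m denotes the m-th cyclotomic polynomial evaluated at ζ over ℤ. -/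
open Polynomial

private lemma cyclo_eval_pow_aux (p : ℕ) (hp : p.Prime) (n : ℕ) :
    ∀ (j : ℕ) (ζ : ℤ), (cyclotomic (p ^ (j + 1) * n) ℤ).eval ζ
      = (cyclotomic (p * n) ℤ).eval (ζ ^ p ^ j) := by
  intro j
  induction j with
  | zero => intro ζ; simp
  | succ j ih =>
    intro ζ
    have hdvd : p ∣ p ^ (j + 1) * n := dvd_mul_of_dvd_left (dvd_pow_self p (by omega)) n
    have h1 : (p ^ (j + 1) * n) * p = p ^ (j + 2) * n := by ring
    have := cyclotomic_expand_eq_cyclotomic hp hdvd ℤ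
    rw [h1] at this
    rw [← this, expand_eval, ih (ζ ^ p), ← pow_mul, ← pow_succ']

theorem stmt_15 (p : ℕ) (hp : p.Prime) (ζ : ℤ) (n : ℕ) (hn : 1 ≤ n)
    (hpζ : ¬ (p : ℤ) ∣ ζ) (hpn : ¬ p ∣ n)
    (hord : n ≠ orderOf ((ζ : ZMod p))) (k : ℕ) (hk : 1 ≤ k) :
    (p : ℤ) ^ k ∣ (Polynomial.cyclotomic (p ^ k * n) ℤ).eval ζ - 1 := by
  haveI : Fact p.Prime := ⟨hp⟩
  obtain ⟨j, rfl⟩ : ∃ j, k = j + 1 := ⟨k - 1, by omega⟩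
  set y : ℤ := ζ ^ p ^ j with hy
  -- identity: Φ_{p^{j+1} n}(ζ) = Φ_{pn}(y)
  have hid : (cyclotomic (p ^ (j + 1) * n) ℤ).eval ζ = (cyclotomic (p * n) ℤ).eval y :=
    cyclo_eval_pow_aux p hp n j ζ
  -- Φ_n(y^p) = Φ_{pn}(y) * Φ_n(y)
  have hmul : (cyclotomic n ℤ).eval (y ^ p)
      = (cyclotomic (p * n) ℤ).eval y * (cyclotomic n ℤ).eval y := by
    have := cyclotomic_expand_eq_cyclotomic_mul hp hpn ℤ
    have h := congrArg (Polynomial.eval y) this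
    rw [expand_eval, eval_mul, mul_comm n p] at h
    exact h
  -- p^{j+1} ∣ y^p - y
  have hfermat : (p : ℤ) ∣ ζ ^ p - ζ := by
    have : ((ζ ^ p - ζ : ℤ) : ZMod p) = 0 := by
      push_cast
      rw [ZMod.pow_card]; ring
    exact (ZMod.intCast_zmod_eq_zero_iff_dvd _ p).mp this
  have hcast : ((p : ℤ) ^ (j + 1)) = ((p : ℤ)) ^ (j + 1) := rfl
  have hyp : (p : ℤ) ^ (j + 1) ∣ y ^ p - y := by
    have h := dvd_sub_pow_of_dvd_sub (R := ℤ) (p := p) (a := ζ ^ p) (b := ζ) hfermat j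
    push_cast at h
    have e : (ζ ^ p) ^ p ^ j = y ^ p := by rw [hy, ← pow_mul, ← pow_mul, mul_comm]
    rwa [e] at h
  -- hence p^{j+1} ∣ Φ_n(y^p) - Φ_n(y)
  have heval : (p : ℤ) ^ (j + 1) ∣ (cyclotomic n ℤ).eval (y ^ p) - (cyclotomic n ℤ).eval y :=
    hyp.trans (sub_dvd_eval_sub _ _ _)
  -- p ∤ Φ_n(y)
  have hne0 : ¬ (p : ℤ) ∣ (cyclotomic n ℤ).eval y := by
    intro hdvd
    have h0 : (((cyclotomic n ℤ).eval y : ℤ) : ZMod p) = 0 :=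
      (ZMod.intCast_zmod_eq_zero_iff_dvd _ p).mpr hdvd
    have hmap : (((cyclotomic n ℤ).eval y : ℤ) : ZMod p)
        = (cyclotomic n (ZMod p)).eval ((y : ℤ) : ZMod p) := by
      rw [← map_cyclotomic_int n (ZMod p), eval_map]
      exact (eval₂_hom (Int.castRingHom (ZMod p)) y).symm
    have hyζ : ((y : ℤ) : ZMod p) = (ζ : ZMod p) := by
      rw [hy]; push_cast; exact ZMod.pow_card_pow (ζ : ZMod p)
    rw [hmap, hyζ] at h0
    haveI : NeZero (n : ZMod p) := ⟨by
      simpa [ZMod.natCast_eq_zero_iff] using hpn⟩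
    have hroot : IsPrimitiveRoot ((ζ : ZMod p)) n :=
      (Polynomial.isRoot_cyclotomic_iff).mp h0
    exact hord hroot.eq_orderOf
  -- conclude
  have hcop : IsCoprime ((p : ℤ) ^ (j + 1)) ((cyclotomic n ℤ).eval y) := by
    have hpprime : Prime (p : ℤ) := Int.prime_iff_natAbs_prime.mpr (by simpa using hp)
    exact (hpprime.coprime_iff_not_dvd.mpr hne0).pow_left
  have key : (cyclotomic n ℤ).eval (y ^ p) - (cyclotomic n ℤ).eval y
      = (cyclotomic n ℤ).eval y * ((cyclotomic (p * n) ℤ).eval y - 1) := by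
    rw [hmul]; ring
  rw [key] at heval
  rw [hid]
  exact hcop.dvd_of_dvd_mul_left heval
end

section
/- Let p be an odd prime and let ζ be an integer with p ∤ ζ, and let n = ord_p(ζ) be the multiplicative order of ζ modulo p. Then for every integer k ≥ 1, p^{k+1} divides Φ_{p^k n}(ζ) − p, where Φ_m denotes the m-th cyclotomic polynomial evaluated at ζ over ℤ. -/
open Polynomial Finset

/-- Lifting lemma: if `p^j ∣ x - 1` with `j ≥ 1`, then `p^(j+1) ∣ x^p - 1`. -/
lemma aux_lift (p : ℕ) (x : ℤ) (j : ℕ) (hj : 1 ≤ j) (h : (p:ℤ)^j ∣ x - 1) :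
    (p:ℤ)^(j+1) ∣ x^p - 1 := by
  have hgeom : (∑ i ∈ range p, x ^ i) * (x - 1) = x ^ p - 1 := geom_sum_mul x p
  have hp1 : (p:ℤ) ∣ x - 1 := dvd_trans (dvd_pow_self _ (by omega) : (p:ℤ) ∣ (p:ℤ)^j) h
  have hsum : (p:ℤ) ∣ (∑ i ∈ range p, x ^ i) := by
    have h1 : (p:ℤ) ∣ (∑ i ∈ range p, x ^ i) - p := by
      have : (∑ i ∈ range p, x ^ i) - p = ∑ i ∈ range p, (x ^ i - 1) := by
        rw [Finset.sum_sub_distrib]; simp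
      rw [this]
      exact Finset.dvd_sum fun i _ => dvd_trans hp1
        (by simpa using sub_dvd_pow_sub_pow x 1 i)
    have := dvd_add h1 (dvd_refl (p:ℤ))
    simpa using this
  calc (p:ℤ)^(j+1) = (p:ℤ) * (p:ℤ)^j := by ring
  _ ∣ (∑ i ∈ range p, x ^ i) * (x - 1) := mul_dvd_mul hsum h
  _ = x ^ p - 1 := hgeom

/-- Iterated lifting. -/
lemma aux_lift_iter (p : ℕ) (x : ℤ) (h : (p:ℤ) ∣ x - 1) (j : ℕ) :
    (p:ℤ)^(j+1) ∣ x^(p^j) - 1 := by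
  induction j with
  | zero => simpa using h
  | succ j ih =>
      have := aux_lift p (x ^ (p ^ j)) (j+1) (by omega) ih
      rwa [← pow_mul, ← pow_succ] at this

/-- Geometric sum congruence: if `p^j ∣ y-1`, `j ≥ 1`, `p` odd, then
`p^(j+1) ∣ (∑ i < p, y^i) - p`. -/
lemma aux_geom (p : ℕ) (hodd : Odd p) (y : ℤ) (j : ℕ) (hj : 1 ≤ j)
    (h : (p:ℤ)^j ∣ y - 1) : (p:ℤ)^(j+1) ∣ (∑ i ∈ range p, y ^ i) - p := by
  have hp1 : (p:ℤ) ∣ y - 1 := dvd_trans (dvd_pow_self _ (by omega) : (p:ℤ) ∣ (p:ℤ)^j) h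
  have hsub : (∑ i ∈ range p, y ^ i) - p = ∑ i ∈ range p, (y ^ i - 1) := by
    rw [Finset.sum_sub_distrib]; simp
  have hterm : ∀ i : ℕ, y ^ i - 1 = (∑ t ∈ range i, y ^ t) * (y - 1) :=
    fun i => (geom_sum_mul y i).symm
  have hS : (∑ i ∈ range p, y ^ i) - p = (∑ i ∈ range p, ∑ t ∈ range i, y ^ t) * (y - 1) := by
    rw [hsub, Finset.sum_mul]
    exact Finset.sum_congr rfl fun i _ => hterm i
  -- p divides S
  have hpS : (p:ℤ) ∣ (∑ i ∈ range p, ∑ t ∈ range i, y ^ t) := by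
    have h1 : (p:ℤ) ∣ (∑ i ∈ range p, ∑ t ∈ range i, y ^ t) - (∑ i ∈ range p, (i:ℤ)) := by
      rw [← Finset.sum_sub_distrib]
      refine Finset.dvd_sum fun i _ => ?_
      have : (∑ t ∈ range i, y ^ t) - (i:ℤ) = ∑ t ∈ range i, (y ^ t - 1) := by
        rw [Finset.sum_sub_distrib]; simp
      rw [this]
      exact Finset.dvd_sum fun t _ => dvd_trans hp1
        (by simpa using sub_dvd_pow_sub_pow y 1 t)
    have h2 : (p:ℤ) ∣ (∑ i ∈ range p, (i:ℤ)) := by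
      obtain ⟨t, ht⟩ := hodd
      have hnat : (∑ i ∈ range p, i) = p * t := by
        have hgauss := Finset.sum_range_id_mul_two p
        have h3 : p * (p - 1) = p * t * 2 := by
          rw [ht]
          have : 2 * t + 1 - 1 = 2 * t := by omega
          rw [this]; ring
        rw [h3] at hgauss
        exact Nat.eq_of_mul_eq_mul_right (by norm_num) hgauss
      have hZ : (∑ i ∈ range p, (i:ℤ)) = (p:ℤ) * t := by
        have := congrArg (fun z : ℕ => (z : ℤ)) hnat
        push_cast at this
        exact this
      exact ⟨t, hZ⟩
    have := dvd_add h1 h2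
    simpa using this
  rw [hS]
  calc (p:ℤ)^(j+1) = (p:ℤ) * (p:ℤ)^j := by ring
  _ ∣ (∑ i ∈ range p, ∑ t ∈ range i, y ^ t) * (y - 1) := mul_dvd_mul hpS h
  _ = _ := rfl

/-- Expand identity for cyclotomic polynomials at prime powers. -/
lemma aux_expand (p n : ℕ) (hp : p.Prime) (j : ℕ) :
    Polynomial.cyclotomic (p ^ (j+1) * n) ℤ
      = Polynomial.expand ℤ (p ^ j) (Polynomial.cyclotomic (p * n) ℤ) := by
  induction j with
  | zero => simp
  | succ j ih =>
      have hdvd : p ∣ p ^ (j+1) * n := Dvd.dvd.mul_right (dvd_pow_self p (by omega)) n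
      have := Polynomial.cyclotomic_expand_eq_cyclotomic hp hdvd ℤ
      rw [ih] at this
      rw [Polynomial.expand_expand] at this
      have harith : p ^ (j + 1) * n * p = p ^ (j + 1 + 1) * n := by ring
      rw [harith] at this
      rw [← this, pow_succ']

theorem stmt_16 (p : ℕ) (hp : p.Prime) (hodd : Odd p) (ζ : ℤ)
    (hpζ : ¬ (p : ℤ) ∣ ζ) (n : ℕ) (hord : n = orderOf ((ζ : ZMod p)))
    (k : ℕ) (hk : 1 ≤ k) :
    (p : ℤ) ^ (k + 1) ∣ (Polynomial.cyclotomic (p ^ k * n) ℤ).eval ζ - p := by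
  have hζ0 : ((ζ : ZMod p)) ≠ 0 := by
    simpa [ZMod.intCast_zmod_eq_zero_iff_dvd] using hpζ
  haveI : Fact p.Prime := ⟨hp⟩
  have hfermat : (ζ : ZMod p) ^ (p - 1) = 1 := ZMod.pow_card_sub_one_eq_one hζ0
  have hndvd : n ∣ p - 1 := hord ▸ orderOf_dvd_of_pow_eq_one hfermat
  have hn0 : n ≠ 0 := by
    rintro rfl
    have : p - 1 = 0 := Nat.eq_zero_of_zero_dvd hndvd
    have := hp.two_le; omega
  have hnp : ¬ p ∣ n := by
    intro hdvd
    have h1 : p ≤ n := Nat.le_of_dvd (Nat.pos_of_ne_zero hn0) hdvd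
    have h2 : n ≤ p - 1 := Nat.le_of_dvd (by have := hp.two_le; omega) hndvd
    have := hp.two_le; omega
  have hcop : Nat.Coprime n p := (Nat.coprime_comm.mp (hp.coprime_iff_not_dvd.mpr hnp))
  have hk1 : k - 1 + 1 = k := Nat.sub_add_cancel hk
  -- the polynomial Q
  set Q : Polynomial ℤ := ∏ e ∈ n.properDivisors, Polynomial.cyclotomic e ℤ with hQ
  have hF1 : Polynomial.cyclotomic n ℤ * Q = Polynomial.X ^ n - 1 := by
    rw [← Polynomial.prod_cyclotomic_eq_X_pow_sub_one (Nat.pos_of_ne_zero hn0) ℤ,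
      ← Nat.cons_self_properDivisors hn0, Finset.prod_cons]
  -- expand versions of hF1
  have hFj : ∀ j : ℕ, Polynomial.expand ℤ (p ^ j) (Polynomial.cyclotomic n ℤ)
      * Polynomial.expand ℤ (p ^ j) Q = Polynomial.X ^ (p ^ j * n) - 1 := by
    intro j
    have := congrArg (Polynomial.expand ℤ (p ^ j)) hF1
    rw [map_mul, map_sub, map_one, map_pow, Polynomial.expand_X, ← pow_mul] at this
    exact this
  -- key expand identity
  have hA : Polynomial.cyclotomic (p ^ k * n) ℤ
      * Polynomial.expand ℤ (p ^ (k-1)) (Polynomial.cyclotomic n ℤ)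
      = Polynomial.expand ℤ (p ^ k) (Polynomial.cyclotomic n ℤ) := by
    have hbase := Polynomial.cyclotomic_expand_eq_cyclotomic_mul hp hnp ℤ
    have := congrArg (Polynomial.expand ℤ (p ^ (k-1))) hbase
    rw [Polynomial.expand_expand, map_mul] at this
    have h1 : p ^ (k-1) * p = p ^ k := by rw [← pow_succ, hk1]
    rw [h1] at this
    have h2 : Polynomial.expand ℤ (p ^ (k-1)) (Polynomial.cyclotomic (n * p) ℤ)
        = Polynomial.cyclotomic (p ^ k * n) ℤ := by
      rw [mul_comm n p, ← aux_expand p n hp (k-1), hk1]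
    rw [h2] at this
    exact this.symm
  -- the main polynomial identity, with cancellation of X^m - 1
  set m : ℕ := p ^ (k-1) * n with hm
  have hm0 : m ≠ 0 := by
    simp [hm, hn0, hp.ne_zero, pow_ne_zero]
  have hXm : (Polynomial.X ^ m - 1 : Polynomial ℤ) ≠ 0 := by
    intro h
    have := congrArg (Polynomial.eval 0) h
    simp [zero_pow hm0] at this
  have hpm : p * m = p ^ k * n := by rw [hm, ← mul_assoc, ← pow_succ', hk1]
  have hgeompoly : (∑ i ∈ range p, (Polynomial.X ^ m : Polynomial ℤ) ^ i)
      * (Polynomial.X ^ m - 1) = Polynomial.X ^ (p ^ k * n) - 1 := by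
    have := geom_sum_mul (Polynomial.X ^ m : Polynomial ℤ) p
    rwa [← pow_mul, mul_comm m p, hpm] at this
  have hKey : Polynomial.cyclotomic (p ^ k * n) ℤ * Polynomial.expand ℤ (p ^ k) Q
      = (∑ i ∈ range p, (Polynomial.X ^ m : Polynomial ℤ) ^ i)
        * Polynomial.expand ℤ (p ^ (k-1)) Q := by
    apply mul_left_cancel₀ hXm
    calc (Polynomial.X ^ m - 1) * (Polynomial.cyclotomic (p ^ k * n) ℤ
          * Polynomial.expand ℤ (p ^ k) Q)
        = (Polynomial.expand ℤ (p ^ (k-1)) (Polynomial.cyclotomic n ℤ)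
            * Polynomial.expand ℤ (p ^ (k-1)) Q)
          * (Polynomial.cyclotomic (p ^ k * n) ℤ * Polynomial.expand ℤ (p ^ k) Q) := by
          rw [hFj (k-1)]
      _ = (Polynomial.cyclotomic (p ^ k * n) ℤ
            * Polynomial.expand ℤ (p ^ (k-1)) (Polynomial.cyclotomic n ℤ))
          * Polynomial.expand ℤ (p ^ k) Q * Polynomial.expand ℤ (p ^ (k-1)) Q := by ring
      _ = (Polynomial.expand ℤ (p ^ k) (Polynomial.cyclotomic n ℤ)
            * Polynomial.expand ℤ (p ^ k) Q) * Polynomial.expand ℤ (p ^ (k-1)) Q := by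
          rw [hA]
      _ = (Polynomial.X ^ (p ^ k * n) - 1) * Polynomial.expand ℤ (p ^ (k-1)) Q := by
          rw [hFj k]
      _ = (Polynomial.X ^ m - 1) * ((∑ i ∈ range p, (Polynomial.X ^ m : Polynomial ℤ) ^ i)
            * Polynomial.expand ℤ (p ^ (k-1)) Q) := by
          rw [← hgeompoly]; ring
  -- evaluate at ζ
  set Pv : ℤ := (Polynomial.cyclotomic (p ^ k * n) ℤ).eval ζ with hPv
  set Cu : ℤ := Q.eval (ζ ^ (p ^ (k-1))) with hCu
  set Cv : ℤ := Q.eval (ζ ^ (p ^ k)) with hCv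
  set y : ℤ := ζ ^ m with hy
  have hEval : Pv * Cv = (∑ i ∈ range p, y ^ i) * Cu := by
    have := congrArg (Polynomial.eval ζ) hKey
    simpa [Polynomial.eval_mul, Polynomial.expand_eval, Polynomial.eval_finset_sum,
      hPv, hCu, hCv, hy] using this
  -- congruence facts
  have hbase : (p:ℤ) ∣ ζ ^ n - 1 := by
    have : ((ζ : ZMod p)) ^ n = 1 := hord ▸ pow_orderOf_eq_one _
    have h0 : (((ζ ^ n - 1 : ℤ)) : ZMod p) = 0 := by push_cast [this]; ring
    exact_mod_cast (ZMod.intCast_zmod_eq_zero_iff_dvd _ p).mp h0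
  have hy1 : (p:ℤ) ^ k ∣ y - 1 := by
    have := aux_lift_iter p (ζ ^ n) hbase (k-1)
    rwa [← pow_mul, mul_comm n (p ^ (k-1)), ← hm, ← hy, hk1] at this
  have hB : (p:ℤ) ^ (k+1) ∣ (∑ i ∈ range p, y ^ i) - p := aux_geom p hodd y k hk hy1
  have hfermatZ : (p:ℤ) ∣ ζ ^ (p-1) - 1 := by
    have h0 : (((ζ ^ (p-1) - 1 : ℤ)) : ZMod p) = 0 := by push_cast [hfermat]; ring
    exact_mod_cast (ZMod.intCast_zmod_eq_zero_iff_dvd _ p).mp h0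
  have huv : (p:ℤ) ^ k ∣ ζ ^ (p ^ k) - ζ ^ (p ^ (k-1)) := by
    have h1 : (p:ℤ) ^ k ∣ (ζ ^ (p-1)) ^ (p ^ (k-1)) - 1 := by
      have := aux_lift_iter p (ζ ^ (p-1)) hfermatZ (k-1)
      rwa [hk1] at this
    have hexp : p ^ k = p ^ (k-1) + (p-1) * p ^ (k-1) := by
      have h2le := hp.two_le
      calc p ^ k = p ^ (k-1+1) := by rw [hk1]
      _ = p ^ (k-1) * p := pow_succ _ _
      _ = p ^ (k-1) * (1 + (p-1)) := by congr 1; omega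
      _ = p ^ (k-1) + (p-1) * p ^ (k-1) := by ring
    have h2 : ζ ^ (p ^ k) - ζ ^ (p ^ (k-1))
        = ζ ^ (p ^ (k-1)) * ((ζ ^ (p-1)) ^ (p ^ (k-1)) - 1) := by
      rw [hexp, pow_add, pow_mul]; ring
    rw [h2]
    exact Dvd.dvd.mul_left h1 _
  have hCuv : (p:ℤ) ^ k ∣ Cv - Cu := dvd_trans huv (Polynomial.sub_dvd_eval_sub _ _ Q)
  -- Cu is not divisible by p
  have hCuNot : ¬ (p:ℤ) ∣ Cu := by
    intro hdvd
    have h0 : ((Cu : ℤ) : ZMod p) = 0 := (ZMod.intCast_zmod_eq_zero_iff_dvd _ p).mpr hdvd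
    have hmapQ : Q.map (Int.castRingHom (ZMod p))
        = ∏ e ∈ n.properDivisors, Polynomial.cyclotomic e (ZMod p) := by
      rw [hQ, Polynomial.map_prod]
      exact Finset.prod_congr rfl fun e _ => Polynomial.map_cyclotomic e _
    have h1 := Polynomial.eval_intCast_map (Int.castRingHom (ZMod p)) Q (ζ ^ p ^ (k-1))
    rw [hmapQ, Polynomial.eval_prod] at h1
    have hpoint : (((ζ ^ p ^ (k-1) : ℤ)) : ZMod p) = (ζ : ZMod p) ^ p ^ (k-1) := by
      push_cast; rfl
    rw [hpoint] at h1
    simp only [eq_intCast, Int.cast_id] at h1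
    rw [hCu] at h0
    rw [← h1] at h0
    obtain ⟨e, he, h0⟩ := Finset.prod_eq_zero_iff.mp h0
    have hedvd : (Polynomial.cyclotomic e (ZMod p)).eval ((ζ : ZMod p) ^ p ^ (k-1))
        ∣ ((ζ : ZMod p) ^ p ^ (k-1)) ^ e - 1 := by
      have := Polynomial.eval_dvd (Polynomial.cyclotomic.dvd_X_pow_sub_one e (ZMod p))
        (x := (ζ : ZMod p) ^ p ^ (k-1))
      simpa using this
    rw [h0] at hedvd
    have h1 : ((ζ : ZMod p) ^ p ^ (k-1)) ^ e = 1 := by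
      have := zero_dvd_iff.mp hedvd; linear_combination this
    have h2 : n ∣ p ^ (k-1) * e := by
      rw [hord]
      apply orderOf_dvd_of_pow_eq_one
      rwa [pow_mul]
    have h3 : n ∣ e := (Nat.Coprime.pow_right _ hcop).dvd_of_dvd_mul_left h2
    have he2 := Nat.mem_properDivisors.mp he
    have := Nat.le_of_dvd (Nat.pos_of_mem_properDivisors he) h3
    omega
  have hpk : (p:ℤ) ∣ (p:ℤ) ^ k := dvd_pow_self _ (by omega)
  have hCvNot : ¬ (p:ℤ) ∣ Cv := by
    intro hdvd
    apply hCuNot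
    have : (p:ℤ) ∣ Cv - (Cv - Cu) := dvd_sub hdvd (dvd_trans hpk hCuv)
    simpa using this
  have hpprime : Prime (p:ℤ) := Nat.prime_iff_prime_int.mp hp
  have hpS : (p:ℤ) ∣ (∑ i ∈ range p, y ^ i) := by
    have h1 : (p:ℤ) ∣ ((∑ i ∈ range p, y ^ i) - p) := dvd_trans (dvd_pow_self _ (by omega)) hB
    have := dvd_add h1 (dvd_refl (p:ℤ))
    simpa using this
  have hpPv : (p:ℤ) ∣ Pv := by
    have h1 : (p:ℤ) ∣ Pv * Cv := hEval ▸ Dvd.dvd.mul_right hpS Cu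
    rcases hpprime.dvd_mul.mp h1 with h | h
    · exact h
    · exact absurd h hCvNot
  -- final computation
  have hfin : (p:ℤ) ^ (k+1) ∣ (Pv - p) * Cu := by
    have hident : (Pv - p) * Cu
        = ((∑ i ∈ range p, y ^ i) - p) * Cu - Pv * (Cv - Cu) + (Pv * Cv - (∑ i ∈ range p, y ^ i) * Cu) := by
      ring
    rw [hident, hEval, sub_self, add_zero]
    apply dvd_sub
    · exact Dvd.dvd.mul_right hB Cu
    · calc (p:ℤ)^(k+1) = (p:ℤ) * (p:ℤ)^k := by ring
      _ ∣ Pv * (Cv - Cu) := mul_dvd_mul hpPv hCuv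
  have hcopCu : IsCoprime ((p:ℤ) ^ (k+1)) Cu :=
    IsCoprime.pow_left (hpprime.coprime_iff_not_dvd.mpr hCuNot)
  exact hcopCu.dvd_of_dvd_mul_right hfin
end

section
/- Let p be a prime with Legendre symbol (p/5) = −1, and let k ≥ 1 with (p,k) ≠ (2,1). Let S be the set of characteristic factors of F_{p^k}, i.e. the set of primes q such that q ∣ F_{p^k} and q ∤ F_m for all 1 ≤ m < p^k. Then ∏_{q ∈ S} (q/5)^{v_q(F_{p^k})} = −1, where (q/5) is the Legendre symbol and v_q(F_{p^k}) is the q-adic valuation of F_{p^k}; in other words, F_{p^k} has an odd number of characteristic factors q with (q/5) = −1, counted with multiplicity (in particular, at least one). -/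
/-!
Write `F_{p^k} = F_{p^{k-1}} G`. The quotient satisfies
`G ≡ p F_{p^{k-1}+1}^{p-1} (mod F_{p^{k-1}})`, and `p ∤ F_{p^{k-1}}` because `p ∣ F_{p+1}`
(Frobenius swaps the two roots of `X² - X - 1` over `𝔽_p` when `5` is a non-residue). Hence `G`
is coprime to `F_{p^{k-1}}`, and by the strong divisibility `gcd(F_a, F_b) = F_{gcd(a, b)}` its
prime factors are exactly the characteristic factors of `F_{p^k}`, with the same multiplicities.
The product in question is therefore the Jacobi symbol `(G/5)`, which is computed from the
congruence `F_m ≡ 2m·3^m (mod 5)`, i.e. `(F_m/5) = (-1)^(m+1) (m/5)`.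
-/

open Nat Polynomial
open scoped NumberTheorySymbols

/-- Over `𝔽_5`, `X² - X - 1 = (X - 3)²` has the double root `3`. -/
theorem fib_cast_zmod_five (m : ℕ) : (fib m : ZMod 5) = 2 * m * 3 ^ m := by
  induction m using Nat.twoStepInduction with
  | zero => simp
  | one => decide
  | more m ih₀ ih₁ =>
    have h5 : (5 : ZMod 5) = 0 := rfl
    rw [fib_add_two]; push_cast at ih₁ ⊢; rw [ih₀, ih₁]
    linear_combination (-2 * 3 ^ m * ((m : ZMod 5) + 3)) * h5

theorem jacobiSym_fib_five (m : ℕ) : J(fib m | 5) = (-1) ^ (m + 1) * J(m | 5) := by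
  have h : J(fib m | 5) = J(2 * m * 3 ^ m | 5) := by
    apply jacobiSym.mod_left'
    rw [← ZMod.intCast_eq_intCast_iff']
    push_cast
    exact fib_cast_zmod_five m
  have h2 : J(2 | 5) = -1 := by norm_num
  have h3 : J(3 | 5) = -1 := by norm_num
  rw [h, jacobiSym.mul_left, jacobiSym.mul_left, jacobiSym.pow_left, h2, h3]
  ring

section GoldenRatio

variable {R : Type*} [CommRing R] {x : R}

theorem pow_succ_eq_fib_mul_add_fib (hx : x ^ 2 = x + 1) (n : ℕ) :
    x ^ (n + 1) = fib (n + 1) * x + fib n := by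
  induction n with
  | zero => simp
  | succ n ih =>
    rw [pow_succ, ih, fib_add_two]
    push_cast
    linear_combination (fib (n + 1) : R) * hx

theorem pow_char_eq_one_sub (p : ℕ) [Fact p.Prime] [CharP R p] (hp2 : p ≠ 2)
    (hx : x ^ 2 = x + 1) (h5 : (5 : R) ^ (p / 2) = -1) : x ^ p = 1 - x := by
  obtain ⟨m, hm⟩ := (Fact.out : p.Prime).odd_of_ne_two hp2
  have hsqrt5 : (2 * x - 1) ^ 2 = 5 := by linear_combination 4 * hx
  have hfrob : (2 * x - 1) ^ p = 2 * x ^ p - 1 := by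
    rw [sub_pow_char, mul_pow, one_pow, ← frobenius_def, ← frobenius_def, map_ofNat]
  have heuler : (2 * x - 1) ^ p = -(2 * x - 1) := by
    rw [show p / 2 = m by omega] at h5
    rw [hm, pow_succ, pow_mul, hsqrt5, h5]; ring
  have h2 : (2 : R) * ((m + 1 : ℕ) : R) = 1 := by
    have : ((p : ℕ) : R) = 0 := CharP.cast_eq_zero R p
    rw [hm] at this; push_cast at this ⊢; linear_combination this
  linear_combination (((m + 1 : ℕ) : R)) * (hfrob.symm.trans heuler) - (x ^ p + x - 1) * h2
  
end GoldenRatio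

theorem five_pow_half_eq_neg_one {p : ℕ} [Fact p.Prime] (hp2 : p ≠ 2) (hp5 : J(p | 5) = -1) :
    (5 : ZMod p) ^ (p / 2) = -1 := by
  have hleg : legendreSym p 5 = -1 := by
    rw [jacobiSym.legendreSym.to_jacobiSym, ← hp5]
    exact_mod_cast jacobiSym.quadratic_reciprocity_one_mod_four (a := 5) (by norm_num)
      ((Fact.out : p.Prime).odd_of_ne_two hp2)
  simpa [hleg] using (legendreSym.eq_pow p 5).symm

theorem prime_dvd_fib_succ {p : ℕ} (hp : p.Prime) (hp5 : J(p | 5) = -1) : p ∣ fib (p + 1) := by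
  rcases eq_or_ne p 2 with rfl | hp2
  · norm_num
  have := Fact.mk hp
  let f : (ZMod p)[X] := X ^ 2 - X - 1
  have hmonic : f.Monic := by simp only [f]; monicity!
  have hdeg : f.natDegree = 2 := by simp only [f]; compute_degree!
  have : Nontrivial (AdjoinRoot f) :=
    AdjoinRoot.nontrivial f (by rw [degree_eq_natDegree hmonic.ne_zero, hdeg]; norm_num)
  have : CharP (AdjoinRoot f) p := charP_of_injective_ringHom (AdjoinRoot.of f).injective p
  have hroot : AdjoinRoot.root f ^ 2 = AdjoinRoot.root f + 1 := by
    have := AdjoinRoot.eval₂_root f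
    simp only [f, eval₂_sub, eval₂_pow, eval₂_X, eval₂_one] at this
    linear_combination this
  have h5 : (5 : AdjoinRoot f) ^ (p / 2) = -1 := by
    have := congrArg (AdjoinRoot.of f) (five_pow_half_eq_neg_one hp2 hp5)
    rwa [map_pow, map_neg, map_one, map_ofNat] at this
  have key : AdjoinRoot.mk f (C (fib (p + 1) : ZMod p) * X + C (fib p + 1 : ZMod p)) = 0 := by
    have := pow_succ_eq_fib_mul_add_fib hroot p
    rw [pow_succ, pow_char_eq_one_sub p hp2 hroot h5] at this
    simp only [map_add, map_mul, AdjoinRoot.mk_X, map_natCast, map_one]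
    linear_combination -this - hroot
  rw [← ZMod.natCast_eq_zero_iff]
  by_contra hne
  refine AdjoinRoot.mk_ne_zero_of_natDegree_lt hmonic ?_ ?_ key
  · intro h
    simpa [hne, coeff_one] using congrArg (coeff · 1) h
  · rw [hdeg]; exact natDegree_linear_le.trans_lt one_lt_two

theorem not_dvd_fib_pow_of_dvd_fib_succ {p : ℕ} (hp : p.Prime) (h : p ∣ fib (p + 1)) (j : ℕ) :
    ¬ p ∣ fib (p ^ j) := by
  intro hj
  have hcop : Coprime (p ^ j) (p + 1) :=
    (coprime_self_add_right.2 (coprime_one_right p)).pow_left j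
  have : p ∣ fib (Nat.gcd (p ^ j) (p + 1)) := by rw [fib_gcd]; exact Nat.dvd_gcd hj h
  rw [hcop.gcd_eq_one, fib_one] at this
  exact hp.not_dvd_one this

theorem fib_mul_add_one_cast_zmod (n m : ℕ) :
    (fib (m * n + 1) : ZMod (fib n)) = fib (n + 1) ^ m := by
  induction m with
  | zero => simp
  | succ m ih =>
    rw [add_mul, one_mul, fib_add]
    push_cast
    rw [ZMod.natCast_self, ih]
    ring

theorem fib_mul_div_fib_cast_zmod {n : ℕ} (hn : n ≠ 0) (m : ℕ) :
    ((fib ((m + 1) * n) / fib n : ℕ) : ZMod (fib n)) = (m + 1) * fib (n + 1) ^ m := by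
  have hfib : 0 < fib n := fib_pos.2 (pos_of_ne_zero hn)
  induction m with
  | zero => simp [Nat.div_self hfib]
  | succ m ih =>
    obtain ⟨a, ha⟩ : fib n ∣ fib ((m + 1) * n) := fib_dvd _ _ (dvd_mul_left n _)
    have hrec : fib ((m + 1 + 1) * n) = fib n * (a * fib (n - 1) + fib ((m + 1) * n + 1)) := by
      have := fib_add ((m + 1) * n) (n - 1)
      rw [show (m + 1) * n + (n - 1) + 1 = (m + 1 + 1) * n by grind, Nat.sub_add_cancel
        (one_le_iff_ne_zero.2 hn), ha] at this
      rw [this]; ring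
    have hprev : (fib (n - 1) : ZMod (fib n)) = fib (n + 1) := by
      rw [fib_add_one hn]; push_cast; rw [ZMod.natCast_self, add_zero]
    rw [ha, Nat.mul_div_cancel_left _ hfib] at ih
    rw [hrec, Nat.mul_div_cancel_left _ hfib]
    push_cast
    rw [ih, hprev, fib_mul_add_one_cast_zmod]
    ring

theorem coprime_fib_mul_div_fib {m n : ℕ} (hm : m ≠ 0) (hn : n ≠ 0)
    (hmn : Coprime m (fib n)) :
    Coprime (fib (m * n) / fib n) (fib n) := by
  obtain ⟨m, rfl⟩ := exists_eq_succ_of_ne_zero hm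
  rw [← ZMod.isUnit_iff_coprime, fib_mul_div_fib_cast_zmod hn]
  have hm' : IsUnit ((m + 1 : ℕ) : ZMod (fib n)) := (ZMod.isUnit_iff_coprime _ _).2 hmn
  have hsucc : IsUnit (fib (n + 1) : ZMod (fib n)) :=
    (ZMod.isUnit_iff_coprime _ _).2 (fib_coprime_fib_succ n).symm
  push_cast at hm'
  exact hm'.mul (hsucc.pow m)

theorem dvd_fib_pow_of_dvd_fib_of_lt {p q m k : ℕ} (hp : p.Prime) (hm0 : m ≠ 0)
    (hm : m < p ^ (k + 1)) (hqm : q ∣ fib m) (hqk : q ∣ fib (p ^ (k + 1))) :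
    q ∣ fib (p ^ k) := by
  obtain ⟨i, hi, hgcd⟩ := (Nat.dvd_prime_pow hp).1 (Nat.gcd_dvd_right m (p ^ (k + 1)))
  have hik : i ≤ k := by
    by_contra! hik
    have hdvd : p ^ (k + 1) ∣ m := by
      rw [show k + 1 = i by omega, ← hgcd]; exact Nat.gcd_dvd_left m _
    exact absurd (Nat.le_of_dvd (pos_of_ne_zero hm0) hdvd) (not_le.2 hm)
  calc q ∣ Nat.gcd (fib m) (fib (p ^ (k + 1))) := Nat.dvd_gcd hqm hqk
    _ = fib (Nat.gcd m (p ^ (k + 1))) := (fib_gcd _ _).symm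
    _ ∣ fib (p ^ k) := fib_dvd _ _ (hgcd ▸ pow_dvd_pow p hik)

theorem prod_primeFactors_jacobiSym_pow {a : ℕ} (ha : a ≠ 0) (b : ℕ) :
    ∏ q ∈ a.primeFactors, J(q | b) ^ padicValNat q a = J(a | b) := by
  have hmul : ∀ x y : ℕ, Coprime x y → J((x * y : ℕ) | b) = J(x | b) * J(y | b) := by
    intro x y _; push_cast; exact jacobiSym.mul_left _ _ _
  rw [multiplicative_factorization (fun x : ℕ => J(x | b)) hmul (by simp) ha,
    prod_factorization_eq_prod_primeFactors]
  refine Finset.prod_congr rfl fun q hq => ?_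
  rw [factorization_def a (prime_of_mem_primeFactors hq)]
  push_cast
  exact (jacobiSym.pow_left _ _ _).symm

theorem padicValNat_mul_of_not_dvd_left {q a b : ℕ} [Fact q.Prime] (hqa : ¬ q ∣ a)
    (hb : b ≠ 0) :
    padicValNat q (a * b) = padicValNat q b := by
  rw [padicValNat.mul (by rintro rfl; exact hqa (dvd_zero q)) hb,
    padicValNat.eq_zero_of_not_dvd hqa, zero_add]

theorem filter_primeFactors_fib_prime_pow_eq {p j G : ℕ} (hp : p.Prime)
    (hG : fib (p ^ (j + 1)) = fib (p ^ j) * G) (hcop : Coprime G (fib (p ^ j))) :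
    (fib (p ^ (j + 1))).primeFactors.filter
      (fun q => ∀ m : ℕ, 1 ≤ m → m < p ^ (j + 1) → ¬ q ∣ fib m) = G.primeFactors := by
  ext q
  simp only [Finset.mem_filter, mem_primeFactors]
  constructor
  · rintro ⟨⟨hq, hqd, hne⟩, hchar⟩
    rw [hG] at hqd hne
    have hqn : ¬ q ∣ fib (p ^ j) :=
      hchar _ (one_le_pow _ _ hp.pos) (pow_lt_pow_right₀ hp.one_lt j.lt_succ_self)
    exact ⟨hq, (hq.dvd_mul.1 hqd).resolve_left hqn, right_ne_zero_of_mul hne⟩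
  · rintro ⟨hq, hqG, hG0⟩
    have hqN : q ∣ fib (p ^ (j + 1)) := hG ▸ dvd_mul_of_dvd_right hqG _
    have hqn : ¬ q ∣ fib (p ^ j) := hq.coprime_iff_not_dvd.1 (hcop.coprime_dvd_left hqG)
    refine ⟨⟨hq, hqN, (fib_pos.2 (pow_pos hp.pos _)).ne'⟩, fun m hm1 hm hqm => ?_⟩
    exact hqn (dvd_fib_pow_of_dvd_fib_of_lt hp (by omega) hm hqm hqN)

theorem jacobiSym_fib_mul_div_fib {m n G : ℕ} (hn : J(n | 5) ≠ 0) (hpar : Even m → Even n)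
    (hG : fib (m * n) = fib n * G) : J(G | 5) = J(m | 5) := by
  have key := congrArg (fun a : ℕ => J(a | 5)) hG
  simp only [Nat.cast_mul, jacobiSym.mul_left, jacobiSym_fib_five] at key
  have hsign : (-1 : ℤ) ^ (m * n + 1) = (-1) ^ (n + 1) := by
    refine neg_one_pow_congr ?_
    simp only [Nat.even_add_one, Nat.even_mul, not_iff_not]
    tauto
  rw [hsign] at key
  have hunit : (-1 : ℤ) ^ (n + 1) * J(n | 5) ≠ 0 := mul_ne_zero (by simp) hn
  exact (mul_left_cancel₀ hunit (by linear_combination key)).symm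

theorem stmt_18 (p : ℕ) (hp : p.Prime)
    (hp5 : jacobiSym (p : ℤ) 5 = -1) (k : ℕ) (hk : 1 ≤ k)
    (hexc : ¬ (p = 2 ∧ k = 1)) :
    (∏ q ∈ (Nat.fib (p ^ k)).primeFactors.filter
        (fun q => ∀ m : ℕ, 1 ≤ m → m < p ^ k → ¬ q ∣ Nat.fib m),
      (jacobiSym (q : ℤ) 5) ^ (padicValNat q (Nat.fib (p ^ k)))) = -1 := by
  obtain ⟨j, rfl⟩ : ∃ j, k = j + 1 := ⟨k - 1, by omega⟩
  set G := fib (p ^ (j + 1)) / fib (p ^ j) with hG_def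
  have hG : fib (p ^ (j + 1)) = fib (p ^ j) * G :=
    (Nat.mul_div_cancel' (fib_dvd _ _ (pow_dvd_pow p j.le_succ))).symm
  have hG0 : G ≠ 0 := by
    intro h; simp [h, hp.ne_zero] at hG
  have hcop : Coprime G (fib (p ^ j)) := by
    rw [hG_def, pow_succ']
    exact coprime_fib_mul_div_fib hp.ne_zero (pow_ne_zero j hp.ne_zero) (hp.coprime_iff_not_dvd.2
      (not_dvd_fib_pow_of_dvd_fib_succ hp (prime_dvd_fib_succ hp hp5) j))
  have hval : ∀ q ∈ G.primeFactors, padicValNat q (fib (p ^ (j + 1))) = padicValNat q G := by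
    intro q hq
    have hq' := prime_of_mem_primeFactors hq
    have := Fact.mk hq'
    rw [hG, padicValNat_mul_of_not_dvd_left
      (hq'.coprime_iff_not_dvd.1 (hcop.coprime_dvd_left (dvd_of_mem_primeFactors hq))) hG0]
  have hpar : Even p → Even (p ^ j) := fun hev =>
    Nat.even_pow.2 ⟨hev, by rintro rfl; exact hexc ⟨hp.even_iff.1 hev, rfl⟩⟩
  have hJ : J((p ^ j : ℕ) | 5) ≠ 0 := by
    rw [Nat.cast_pow, jacobiSym.pow_left, hp5]; exact pow_ne_zero _ (by norm_num)
  rw [filter_primeFactors_fib_prime_pow_eq hp hG hcop,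
    Finset.prod_congr rfl fun q hq => by rw [hval q hq], prod_primeFactors_jacobiSym_pow hG0,
    jacobiSym_fib_mul_div_fib hJ hpar (by rwa [← pow_succ']), hp5]
end
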